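/- arXiv:1501.07242 — 8 statements merged into one kernel-verified Lean document; each statement's English description precedes it below -/
import Mathlib

section
/- If g : ℝ → [0,∞) is a unidimensional β-log-concave function (β ≥ 0), then there exists a log-concave function h : ℝ → [0,∞) such that e^{−β} h(x) ≤ g(x) ≤ h(x) for all x ∈ ℝ. -/
open Real Set

/-!
Let `h x` be the supremum of the geometric means `g u ^ a * g v ^ (1 - a)` over all chords
`a * u + (1 - a) * v = x`. Taking `u = v = x` gives `g ≤ h`, and `β`-log-concavity bounds each such
mean by `e^β * g x`. For log-concavity of `h`, the product `r ^ α * s ^ (1 - α)` of a chord mean at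
`x` and one at `y` is a weighted geometric mean of four values of `g` whose nodes have barycentre
`z = α x + (1 - α) y`. On the line such a mean is dominated by a two-point one: if every chord of
`log g` over `z` stays below `log H`, the slopes from `(z, log H)` to the nodes right of `z` are at
most those to the nodes left of `z`, so some line through `(z, log H)` lies above all nodes, and
averaging it gives the claim. Passing to suprema uses continuity of `(r, s) ↦ r ^ α * s ^ (1 - α)`.
-/

theorem exists_between_of_bddAbove_bddBelow {α : Type*} [ConditionallyCompleteLinearOrder α]
    {A B : Set α} (hA : BddAbove A) (hB : BddBelow B) (hAB : ∀ a ∈ A, ∀ b ∈ B, a ≤ b) :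
    ∃ s, (∀ a ∈ A, a ≤ s) ∧ ∀ b ∈ B, s ≤ b := by
  rcases A.eq_empty_or_nonempty with rfl | hA₀
  · obtain ⟨s, hs⟩ := hB
    exact ⟨s, by simp, hs⟩
  rcases B.eq_empty_or_nonempty with rfl | hB₀
  · obtain ⟨s, hs⟩ := hA
    exact ⟨s, hs, by simp⟩
  exact exists_between_of_forall_le hA₀ hB₀ hAB

theorem exists_mem_Icc_mul_add_one_sub_mul_eq {x y z : ℝ} (hx : x ≤ z) (hy : z ≤ y) :
    ∃ μ ∈ Icc (0 : ℝ) 1, μ * x + (1 - μ) * y = z := by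
  have hz : z ∈ segment ℝ x y := by rw [segment_eq_Icc (hx.trans hy)]; exact ⟨hx, hy⟩
  obtain ⟨a, b, ha, hb, hab, rfl⟩ := hz
  refine ⟨a, ⟨ha, by linarith⟩, ?_⟩
  rw [← hab]
  simp [smul_eq_mul]

section Chords

variable {ι : Type*} {w F : ι → ℝ} {z H : ℝ}

theorem exists_slope_of_chord_le (t : Finset ι)
    (hchord : ∀ i ∈ t, ∀ j ∈ t, ∀ μ ∈ Icc (0 : ℝ) 1,
      μ * w i + (1 - μ) * w j = z → μ * F i + (1 - μ) * F j ≤ H) :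
    ∃ s, ∀ i ∈ t, F i ≤ H + s * (w i - z) := by
  set slope : ι → ℝ := fun i => (F i - H) / (w i - z)
  have slope_le : ∀ j ∈ t, z < w j → ∀ i ∈ t, w i < z → slope j ≤ slope i := by
    intro j hj hzj i hi hiz
    obtain ⟨μ, hμ, hμz⟩ := exists_mem_Icc_mul_add_one_sub_mul_eq hiz.le hzj.le
    have hchord_ij := hchord i hi j hj μ hμ hμz
    have key : (F j - H) * (z - w i) + (F i - H) * (w j - z) ≤ 0 := by
      rw [show z - w i = (1 - μ) * (w j - w i) by linarith,
        show w j - z = μ * (w j - w i) by linarith]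
      nlinarith [hμ.1]
    rw [div_le_iff₀ (sub_pos.2 hzj), div_mul_eq_mul_div, le_div_iff_of_neg (sub_neg.2 hiz)]
    linarith
  obtain ⟨s, hright, hleft⟩ := exists_between_of_bddAbove_bddBelow
    ((t.filter (z < w ·)).image slope).bddAbove ((t.filter (w · < z)).image slope).bddBelow
    (by
      simp only [Finset.coe_image, Finset.coe_filter, forall_mem_image]
      exact fun j ⟨hj, hzj⟩ i ⟨hi, hiz⟩ => slope_le j hj hzj i hi hiz)
  refine ⟨s, fun i hi => ?_⟩
  rcases lt_trichotomy (w i) z with hiz | hiz | hiz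
  · have := hleft (slope i) (by simpa using ⟨i, ⟨hi, hiz⟩, rfl⟩)
    rw [le_div_iff_of_neg (sub_neg.2 hiz)] at this
    linarith
  · simpa [hiz] using hchord i hi i hi 1 (by simp) (by simp [hiz])
  · have := hright (slope i) (by simpa using ⟨i, ⟨hi, hiz⟩, rfl⟩)
    rw [div_le_iff₀ (sub_pos.2 hiz)] at this
    linarith

theorem sum_mul_le_of_chord_le {c : ι → ℝ} (t : Finset ι) (hc : ∀ i ∈ t, 0 ≤ c i)
    (hsum : ∑ i ∈ t, c i = 1) (hbar : ∑ i ∈ t, c i * w i = z)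
    (hchord : ∀ i ∈ t, ∀ j ∈ t, ∀ μ ∈ Icc (0 : ℝ) 1,
      μ * w i + (1 - μ) * w j = z → μ * F i + (1 - μ) * F j ≤ H) :
    ∑ i ∈ t, c i * F i ≤ H := by
  obtain ⟨s, hs⟩ := exists_slope_of_chord_le t hchord
  calc ∑ i ∈ t, c i * F i ≤ ∑ i ∈ t, c i * (H + s * (w i - z)) :=
        Finset.sum_le_sum fun i hi => mul_le_mul_of_nonneg_left (hs i hi) (hc i hi)
    _ = (∑ i ∈ t, c i) * H + s * (∑ i ∈ t, c i * w i - (∑ i ∈ t, c i) * z) := by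
        simp only [Finset.sum_mul, Finset.mul_sum, ← Finset.sum_sub_distrib,
          ← Finset.sum_add_distrib]
        exact Finset.sum_congr rfl fun i _ => by ring
    _ = H := by rw [hsum, hbar]; ring

theorem exists_ne_zero_le_sum_mul [Fintype ι] {c : ι → ℝ} (hc : ∀ i, 0 ≤ c i)
    (hsum : ∑ i, c i = 1) (w : ι → ℝ) : ∃ i, c i ≠ 0 ∧ w i ≤ ∑ k, c k * w k := by
  by_contra! h
  obtain ⟨i, -, hi⟩ := Finset.exists_ne_zero_of_sum_ne_zero (hsum.trans_ne one_ne_zero)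
  have hlt : ∑ k, c k * ∑ l, c l * w l < ∑ k, c k * w k :=
    Finset.sum_lt_sum
      (fun k _ => (eq_or_ne (c k) 0).elim (fun h0 => by simp [h0])
        fun hk => mul_le_mul_of_nonneg_left (h k hk).le (hc k))
      ⟨i, Finset.mem_univ i, mul_lt_mul_of_pos_left (h i hi) ((hc i).lt_of_ne' hi)⟩
  rw [← Finset.sum_mul, hsum, one_mul] at hlt
  exact hlt.false

theorem prod_rpow_le_of_chord_le [Fintype ι] {G c : ι → ℝ} (hG : ∀ i, 0 ≤ G i)
    (hc : ∀ i, 0 ≤ c i) (hsum : ∑ i, c i = 1) (hbar : ∑ i, c i * w i = z)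
    (hchord : ∀ i j, ∀ μ ∈ Icc (0 : ℝ) 1,
      μ * w i + (1 - μ) * w j = z → G i ^ μ * G j ^ (1 - μ) ≤ H) :
    ∏ i, G i ^ c i ≤ H := by
  obtain ⟨i, hci, hiz⟩ := exists_ne_zero_le_sum_mul hc hsum w
  obtain ⟨j, hcj, hzj⟩ := exists_ne_zero_le_sum_mul hc hsum (-w)
  simp only [Pi.neg_apply, mul_neg, Finset.sum_neg_distrib, neg_le_neg_iff] at hzj
  obtain ⟨μ, hμ, hμz⟩ := exists_mem_Icc_mul_add_one_sub_mul_eq (hbar ▸ hiz) (hbar ▸ hzj)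
  have hH := hchord i j μ hμ hμz
  by_cases hzero : ∃ k, c k ≠ 0 ∧ G k = 0
  · obtain ⟨k, hck, hGk⟩ := hzero
    rw [Finset.prod_eq_zero (Finset.mem_univ k) (by rw [hGk, zero_rpow hck])]
    exact (by have := hG i; have := hG j; positivity : (0 : ℝ) ≤ _).trans hH
  push Not at hzero
  set t := Finset.univ.filter (fun k => c k ≠ 0)
  have hGt : ∀ k ∈ t, 0 < G k := fun k hk =>
    (hG k).lt_of_ne' (hzero k (Finset.mem_filter.1 hk).2)
  have hHpos : 0 < H := by
    refine lt_of_lt_of_le (mul_pos (rpow_pos_of_pos ?_ _) (rpow_pos_of_pos ?_ _)) hH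
    exacts [hGt i (by simpa [t] using hci), hGt j (by simpa [t] using hcj)]
  have hlog : ∑ k ∈ t, c k * log (G k) ≤ log H := by
    refine sum_mul_le_of_chord_le (w := w) (z := z) t (fun k _ => hc k) ?_ ?_
      fun k hk l hl μ hμ hz => ?_
    · rwa [Finset.sum_filter_ne_zero]
    · rwa [Finset.sum_filter_of_ne fun k _ h => left_ne_zero_of_mul h]
    · rw [← log_rpow (hGt k hk), ← log_rpow (hGt l hl),
        ← log_mul (rpow_pos_of_pos (hGt k hk) _).ne' (rpow_pos_of_pos (hGt l hl) _).ne']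
      exact log_le_log (by have := hGt k hk; have := hGt l hl; positivity) (hchord k l μ hμ hz)
  calc ∏ k, G k ^ c k = ∏ k ∈ t, G k ^ c k :=
        (Finset.prod_filter_of_ne fun k _ h => by contrapose! h; simp [h]).symm
    _ = exp (∑ k ∈ t, c k * log (G k)) := by
        rw [exp_sum]
        exact Finset.prod_congr rfl fun k hk => by rw [rpow_def_of_pos (hGt k hk), mul_comm]
    _ ≤ exp (log H) := exp_le_exp.2 hlog
    _ = H := exp_log hHpos

end Chords

theorem csSup_rpow_mul_csSup_rpow_le {S T : Set ℝ} (hS : S.Nonempty) (hS' : BddAbove S)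
    (hT : T.Nonempty) (hT' : BddAbove T) {α C : ℝ} (hα : α ∈ Icc (0 : ℝ) 1)
    (h : ∀ r ∈ S, ∀ s ∈ T, r ^ α * s ^ (1 - α) ≤ C) : sSup S ^ α * sSup T ^ (1 - α) ≤ C := by
  have hcont : Continuous fun p : ℝ × ℝ => p.1 ^ α * p.2 ^ (1 - α) :=
    ((continuous_rpow_const hα.1).comp continuous_fst).mul
      ((continuous_rpow_const (sub_nonneg.2 hα.2)).comp continuous_snd)
  have hmem : (sSup S, sSup T) ∈ closure (S ×ˢ T) := by
    rw [closure_prod_eq]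
    exact ⟨csSup_mem_closure hS hS', csSup_mem_closure hT hT'⟩
  exact closure_minimal (fun p hp => h _ hp.1 _ hp.2) (isClosed_le hcont continuous_const) hmem

def geomChordMeans (g : ℝ → ℝ) (x : ℝ) : Set ℝ :=
  {r | ∃ a ∈ Icc (0 : ℝ) 1, ∃ u v, a * u + (1 - a) * v = x ∧ g u ^ a * g v ^ (1 - a) = r}

noncomputable def geomChordSup (g : ℝ → ℝ) (x : ℝ) : ℝ :=
  sSup (geomChordMeans g x)

section GeomChordSup

variable {g : ℝ → ℝ}

theorem self_mem_geomChordMeans (g : ℝ → ℝ) (x : ℝ) : g x ∈ geomChordMeans g x :=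
  ⟨1, ⟨zero_le_one, le_rfl⟩, x, x, by ring, by simp⟩

theorem le_exp_mul_of_mem_geomChordMeans {β : ℝ}
    (hgβ : ∀ x y : ℝ, ∀ α ∈ Icc (0 : ℝ) 1,
      exp (-β) * (g x ^ α * g y ^ (1 - α)) ≤ g (α * x + (1 - α) * y))
    {x r : ℝ} (hr : r ∈ geomChordMeans g x) : r ≤ exp β * g x := by
  obtain ⟨a, ha, u, v, rfl, rfl⟩ := hr
  calc g u ^ a * g v ^ (1 - a) = exp β * (exp (-β) * (g u ^ a * g v ^ (1 - a))) := by
        rw [← mul_assoc, ← exp_add, add_neg_cancel, exp_zero, one_mul]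
    _ ≤ exp β * g (a * u + (1 - a) * v) := by gcongr; exact hgβ u v a ha

theorem le_geomChordSup {x : ℝ} (hbdd : BddAbove (geomChordMeans g x)) :
    g x ≤ geomChordSup g x :=
  le_csSup hbdd (self_mem_geomChordMeans g x)

theorem geomChordSup_le_exp_mul {β : ℝ}
    (hgβ : ∀ x y : ℝ, ∀ α ∈ Icc (0 : ℝ) 1,
      exp (-β) * (g x ^ α * g y ^ (1 - α)) ≤ g (α * x + (1 - α) * y))
    (x : ℝ) : geomChordSup g x ≤ exp β * g x :=
  csSup_le ⟨_, self_mem_geomChordMeans g x⟩ fun _ => le_exp_mul_of_mem_geomChordMeans hgβ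

theorem rpow_mul_rpow_le_geomChordSup (hg0 : ∀ x, 0 ≤ g x) {x y α : ℝ}
    (hbdd : BddAbove (geomChordMeans g (α * x + (1 - α) * y))) (hα : α ∈ Icc (0 : ℝ) 1)
    {r s : ℝ} (hr : r ∈ geomChordMeans g x) (hs : s ∈ geomChordMeans g y) :
    r ^ α * s ^ (1 - α) ≤ geomChordSup g (α * x + (1 - α) * y) := by
  obtain ⟨hα₀, hα₁⟩ := hα
  obtain ⟨a, ⟨ha₀, ha₁⟩, u, v, rfl, rfl⟩ := hr
  obtain ⟨b, ⟨hb₀, hb₁⟩, p, q, rfl, rfl⟩ := hs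
  set w : Fin 4 → ℝ := ![u, v, p, q]
  have key := prod_rpow_le_of_chord_le (G := fun k => g (w k)) (w := w)
    (H := geomChordSup g (α * (a * u + (1 - a) * v) + (1 - α) * (b * p + (1 - b) * q)))
    (c := ![a * α, (1 - a) * α, b * (1 - α), (1 - b) * (1 - α)]) (fun k => hg0 _)
    (fun k => by
      fin_cases k <;>
        simp only [Fin.zero_eta, Fin.mk_one, Fin.reduceFinMk, Matrix.cons_val_zero,
          Matrix.cons_val_one, Matrix.cons_val] <;>
        apply mul_nonneg <;> linarith)
    (by
      simp only [Fin.sum_univ_four, Matrix.cons_val_zero, Matrix.cons_val_one, Matrix.cons_val]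
      ring)
    (by
      simp only [Fin.sum_univ_four, w, Matrix.cons_val_zero, Matrix.cons_val_one, Matrix.cons_val]
      ring)
    fun i j μ hμ hz => le_csSup hbdd ⟨μ, hμ, w i, w j, hz, rfl⟩
  convert key using 1
  simp only [Fin.prod_univ_four, w, Matrix.cons_val_zero, Matrix.cons_val_one, Matrix.cons_val]
  rw [mul_rpow (rpow_nonneg (hg0 u) _) (rpow_nonneg (hg0 v) _),
    mul_rpow (rpow_nonneg (hg0 p) _) (rpow_nonneg (hg0 q) _), ← rpow_mul (hg0 u),
    ← rpow_mul (hg0 v), ← rpow_mul (hg0 p), ← rpow_mul (hg0 q)]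
  ring

theorem geomChordSup_logConcave (hg0 : ∀ x, 0 ≤ g x) (hbdd : ∀ x, BddAbove (geomChordMeans g x))
    (x y α : ℝ) (hα : α ∈ Icc (0 : ℝ) 1) :
    geomChordSup g x ^ α * geomChordSup g y ^ (1 - α) ≤ geomChordSup g (α * x + (1 - α) * y) :=
  csSup_rpow_mul_csSup_rpow_le ⟨_, self_mem_geomChordMeans g x⟩ (hbdd x)
    ⟨_, self_mem_geomChordMeans g y⟩ (hbdd y) hα
    fun _ hr _ hs => rpow_mul_rpow_le_geomChordSup hg0 (hbdd _) hα hr hs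

end GeomChordSup

theorem unidimensional_beta_logconcave_sandwich_general
    (β : ℝ) (g : ℝ → ℝ) (hg0 : ∀ x, 0 ≤ g x)
    (hgβ : ∀ x y : ℝ, ∀ α : ℝ, α ∈ Set.Icc (0:ℝ) 1 →
      Real.exp (-β) * (g x ^ α * g y ^ (1 - α)) ≤ g (α * x + (1 - α) * y)) :
    ∃ h : ℝ → ℝ, (∀ x, 0 ≤ h x) ∧
      (∀ x y : ℝ, ∀ α : ℝ, α ∈ Set.Icc (0:ℝ) 1 →
        h x ^ α * h y ^ (1 - α) ≤ h (α * x + (1 - α) * y)) ∧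
      (∀ x : ℝ, Real.exp (-β) * h x ≤ g x ∧ g x ≤ h x) := by
  have hbdd : ∀ x, BddAbove (geomChordMeans g x) := fun x =>
    ⟨_, fun _ => le_exp_mul_of_mem_geomChordMeans hgβ⟩
  refine ⟨geomChordSup g, fun x => (hg0 x).trans (le_geomChordSup (hbdd x)),
    geomChordSup_logConcave hg0 hbdd, fun x => ⟨?_, le_geomChordSup (hbdd x)⟩⟩
  calc exp (-β) * geomChordSup g x ≤ exp (-β) * (exp β * g x) := by
        gcongr; exact geomChordSup_le_exp_mul hgβ x
    _ = g x := by rw [← mul_assoc, ← exp_add, neg_add_cancel, exp_zero, one_mul]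

/-- A unidimensional `β`-log-concave function `g : ℝ → [0,∞)` can be
sandwiched by a log-concave function `h`: `e^{−β} h(x) ≤ g(x) ≤ h(x)` for all `x ∈ ℝ`. -/
theorem unidimensional_beta_logconcave_sandwich
    (β : ℝ) (hβ : 0 ≤ β) (g : ℝ → ℝ) (hg0 : ∀ x, 0 ≤ g x)
    (hgβ : ∀ x y : ℝ, ∀ α : ℝ, α ∈ Set.Icc (0:ℝ) 1 →
      Real.exp (-β) * (g x ^ α * g y ^ (1 - α)) ≤ g (α * x + (1 - α) * y)) :
    ∃ h : ℝ → ℝ, (∀ x, 0 ≤ h x) ∧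
      (∀ x y : ℝ, ∀ α : ℝ, α ∈ Set.Icc (0:ℝ) 1 →
        h x ^ α * h y ^ (1 - α) ≤ h (α * x + (1 - α) * y)) ∧
      (∀ x : ℝ, Real.exp (-β) * h x ≤ g x ∧ g x ≤ h x) :=
  unidimensional_beta_logconcave_sandwich_general β g hg0 hgβ
end

section
/- Let h : ℝⁿ → [0,∞) be an integrable log-concave function with maximum value M_h = sup h, and for t > 0 let L_h(t) = {x ∈ ℝⁿ : h(x) ≥ t} denote its upper level set. Then for all 0 < s < t < M_h, vol(L_h(s)) / vol(L_h(t)) ≤ ( log(M_h/s) / log(M_h/t) )ⁿ, where vol denotes Lebesgue measure on ℝⁿ. -/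
open MeasureTheory

/-- Auxiliary identity: for `0 < s < t < u`,
`log (u/s) / log (u/t) = 1 + log (t/s) / log (u/t)`. -/
lemma log_ratio_identity {s t u : ℝ} (hs : 0 < s) (hst : s < t) (htu : t < u) :
    Real.log (u / s) / Real.log (u / t) = 1 + Real.log (t / s) / Real.log (u / t) := by
  have ht : 0 < t := hs.trans hst
  have hu : 0 < u := ht.trans htu
  have hlog : 0 < Real.log (u / t) := Real.log_pos ((one_lt_div ht).2 htu)
  rw [Real.log_div hu.ne' hs.ne', Real.log_div hu.ne' ht.ne', Real.log_div ht.ne' hs.ne'] at *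
  field_simp
  ring

/-- (Lovász–Vempala, Lemma 5.19.) For an integrable log-concave
function `h : ℝⁿ → [0,∞)` with supremum `M_h` and level sets `L_h(t) = {x | h x ≥ t}`,
for all `0 < s < t < M_h` one has
`vol(L_h(s)) / vol(L_h(t)) ≤ (log (M_h/s) / log (M_h/t))ⁿ`. -/
theorem logconcave_level_set_volume_ratio
    {n : ℕ} (h : EuclideanSpace ℝ (Fin n) → ℝ) (h0 : ∀ x, 0 ≤ h x)
    (hlogconc : ∀ x y : EuclideanSpace ℝ (Fin n), ∀ α : ℝ, α ∈ Set.Icc (0:ℝ) 1 →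
      h x ^ α * h y ^ (1 - α) ≤ h (α • x + (1 - α) • y))
    (hint : Integrable h)
    (Mh : ℝ) (hMh : IsLUB (Set.range h) Mh) :
    ∀ s t : ℝ, 0 < s → s < t → t < Mh →
      volume {x | s ≤ h x} / volume {x | t ≤ h x}
        ≤ ENNReal.ofReal ((Real.log (Mh / s) / Real.log (Mh / t)) ^ n) := by
  intro s t hs hst htM
  have ht : 0 < t := hs.trans hst
  have hM : 0 < Mh := ht.trans htM
  have hk : 0 < Real.log (t / s) := Real.log_pos ((one_lt_div hs).2 hst)
  have hlogMt : 0 < Real.log (Mh / t) := Real.log_pos ((one_lt_div ht).2 htM)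
  set A := volume {x : EuclideanSpace ℝ (Fin n) | s ≤ h x} with hA
  set B := volume {x : EuclideanSpace ℝ (Fin n) | t ≤ h x} with hB
  -- key step: for every m' ∈ (t, Mh) we have A ≤ (1 + log(t/s)/log(m'/t))^n * B
  have key : ∀ m' ∈ Set.Ioo t Mh,
      A ≤ ENNReal.ofReal ((1 + Real.log (t / s) / Real.log (m' / t)) ^ n) * B := by
    intro m' hm'
    obtain ⟨hm't, hm'M⟩ := hm'
    obtain ⟨z, hz⟩ : ∃ z, m' < h z := by
      by_contra hcon
      push_neg at hcon
      have : Mh ≤ m' := hMh.2 (by rintro _ ⟨x, rfl⟩; exact hcon x)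
      linarith
    set m := h z with hmdef
    have hmt : t < m := hm't.trans hz
    have hms : s < m := hst.trans hmt
    have hm0 : 0 < m := ht.trans hmt
    have hlogmt : 0 < Real.log (m / t) := Real.log_pos ((one_lt_div ht).2 hmt)
    have hlogms : 0 < Real.log (m / s) := Real.log_pos ((one_lt_div hs).2 hms)
    have hlt : Real.log (m / t) < Real.log (m / s) :=
      Real.log_lt_log (div_pos hm0 ht) (div_lt_div_of_pos_left hm0 hs hst)
    set α : ℝ := Real.log (m / t) / Real.log (m / s) with hαdef
    have hα0 : 0 < α := div_pos hlogmt hlogms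
    have hα1 : α < 1 := (div_lt_one hlogms).2 hlt
    -- the key inclusion
    have hsub : {x : EuclideanSpace ℝ (Fin n) | s ≤ h x} ⊆
        (fun x => α • x + (1 - α) • z) ⁻¹' {y | t ≤ h y} := by
      intro x hx
      simp only [Set.mem_setOf_eq] at hx ⊢
      have h1 := hlogconc x z α ⟨hα0.le, hα1.le⟩
      have h2 : s ^ α * m ^ (1 - α) ≤ h x ^ α * h z ^ (1 - α) := by
        have := Real.rpow_le_rpow hs.le hx hα0.le
        exact mul_le_mul_of_nonneg_right this (Real.rpow_nonneg (h0 z) _)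
      have h3 : s ^ α * m ^ (1 - α) = t := by
        rw [Real.rpow_def_of_pos hs, Real.rpow_def_of_pos hm0, ← Real.exp_add,
          ← Real.exp_log ht]
        congr 1
        have hαeq : α = (Real.log m - Real.log t) / (Real.log m - Real.log s) := by
          rw [hαdef, Real.log_div hm0.ne' ht.ne', Real.log_div hm0.ne' hs.ne']
        have hne : Real.log m - Real.log s ≠ 0 := by
          rw [← Real.log_div hm0.ne' hs.ne']; exact hlogms.ne'
        rw [hαeq]
        field_simp
        ring
      exact h3 ▸ (h2.trans h1)
    -- measure computation of the preimage
    have hmeas : volume ((fun x : EuclideanSpace ℝ (Fin n) => α • x + (1 - α) • z)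
        ⁻¹' {y | t ≤ h y}) = ENNReal.ofReal ((α⁻¹) ^ n) * B := by
      have hcomp : (fun x : EuclideanSpace ℝ (Fin n) => α • x + (1 - α) • z)
          = (fun y => y + (1 - α) • z) ∘ (fun x => α • x) := rfl
      rw [hcomp, Set.preimage_comp, Set.preimage_smul₀ hα0.ne',
        Measure.addHaar_smul, measure_preimage_add_right]
      rw [finrank_euclideanSpace_fin, abs_of_pos (pow_pos (inv_pos.2 hα0) n)]
    have hle1 : A ≤ ENNReal.ofReal ((α⁻¹) ^ n) * B := hmeas ▸ measure_mono hsub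
    refine hle1.trans ?_
    refine mul_le_mul_left (ENNReal.ofReal_le_ofReal ?_) B
    refine pow_le_pow_left₀ (inv_nonneg.2 hα0.le) ?_ n
    have hαinv : α⁻¹ = 1 + Real.log (t / s) / Real.log (m / t) := by
      rw [hαdef, inv_div]
      exact log_ratio_identity hs hst hmt
    rw [hαinv]
    have hlogm't : 0 < Real.log (m' / t) := Real.log_pos ((one_lt_div ht).2 hm't)
    have hlogle : Real.log (m' / t) ≤ Real.log (m / t) := by
      have hdiv : m' / t ≤ m / t := by gcongr
      exact Real.log_le_log (div_pos (ht.trans hm't) ht) hdiv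
    exact add_le_add_right (div_le_div_of_nonneg_left hk.le hlogm't hlogle) 1
  -- take the limit m' → Mh⁻
  have hcpos : 0 < 1 + Real.log (t / s) / Real.log (Mh / t) := by positivity
  have hmain : A ≤ ENNReal.ofReal ((1 + Real.log (t / s) / Real.log (Mh / t)) ^ n) * B := by
    have hcont : Filter.Tendsto
        (fun m' : ℝ => ENNReal.ofReal ((1 + Real.log (t / s) / Real.log (m' / t)) ^ n) * B)
        (nhdsWithin Mh (Set.Iio Mh))
        (nhds (ENNReal.ofReal ((1 + Real.log (t / s) / Real.log (Mh / t)) ^ n) * B)) := by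
      have h1 : ContinuousAt (fun m' : ℝ =>
          (1 + Real.log (t / s) / Real.log (m' / t)) ^ n) Mh := by
        apply ContinuousAt.pow
        apply ContinuousAt.add continuousAt_const
        apply ContinuousAt.div continuousAt_const
        · exact ((continuous_id.div_const t).continuousAt).log
            (by simpa using (div_pos hM ht).ne')
        · exact hlogMt.ne'
      have h2 : ContinuousAt (fun m' : ℝ =>
          ENNReal.ofReal ((1 + Real.log (t / s) / Real.log (m' / t)) ^ n)) Mh :=
        ENNReal.continuous_ofReal.continuousAt.comp h1
      exact (ENNReal.Tendsto.mul_const (h2.tendsto.mono_left nhdsWithin_le_nhds)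
        (Or.inl (by positivity)))
    refine ge_of_tendsto hcont ?_
    filter_upwards [Ioo_mem_nhdsLT_of_mem (Set.mem_Ioc.2 ⟨htM, le_refl Mh⟩)] with m' hm'
    exact key m' hm'
  have hfinal : (1 + Real.log (t / s) / Real.log (Mh / t)) =
      Real.log (Mh / s) / Real.log (Mh / t) :=
    (log_ratio_identity hs hst htM).symm
  rw [← hfinal]
  exact ENNReal.div_le_of_le_mul hmain
end

section
/- Let h : ℝ → [0,∞) be an integrable log-concave function with ∫ h > 0 and M_h = sup_{x∈ℝ} h(x) < ∞, and let X be a random variable with density proportional to h. Then for every t ≥ 0, P(h(X) ≤ t) ≤ t / M_h. -/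
/-! Fix `p` with `t < h p` and let `a` be the supremum of the points left of `p` where `h ≤ t`.
By log-concavity `h` lies below the exponential through `(a, t)` and `(p, h p)` on `(-∞, a]`
and above it on `[a, p]`. Integrating that exponential, with `L = log (h p / t)`, gives
`∫_{-∞}^a h ≤ t (p - a) / L` and `(h p - t) (p - a) / L ≤ ∫_a^p h`, hence
`∫_{-∞}^a h ≤ (t / h p) ∫_{-∞}^p h`. The right of `p` is the mirror image, and letting `h p`
increase to `sup h` gives the bound. -/

open MeasureTheory Set Real Filter Topology

def LogConcave (h : ℝ → ℝ) : Prop :=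
  ∀ x y : ℝ, ∀ α : ℝ, α ∈ Icc (0:ℝ) 1 → h x ^ α * h y ^ (1 - α) ≤ h (α * x + (1 - α) * y)

theorem mul_exp_eq_exp_log_add {m : ℝ} (hm : 0 < m) (z : ℝ) : m * exp z = exp (log m + z) := by
  rw [exp_add, exp_log hm]

theorem mul_exp_log_div_mul_sub {m t s p : ℝ} (hm : 0 < m) (ht : 0 < t) (hsp : s ≠ p) :
    m * exp (log (m / t) / (p - s) * (s - p)) = t := by
  have hps : p - s ≠ 0 := sub_ne_zero.2 hsp.symm
  rw [show log (m / t) / (p - s) * (s - p) = -log (m / t) by field_simp; ring, exp_neg,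
    exp_log (div_pos hm ht)]
  field_simp

theorem exp_mul_sub (c x p : ℝ) : exp (c * (x - p)) = exp (c * x) * exp (-(c * p)) := by
  rw [← exp_add, mul_sub, sub_eq_add_neg]

theorem integrableOn_Iic_exp_mul_sub {c : ℝ} (hc : 0 < c) (s p : ℝ) :
    IntegrableOn (fun x => exp (c * (x - p))) (Iic s) := by
  simp_rw [exp_mul_sub]
  exact (integrableOn_exp_mul_Iic hc s).mul_const _

theorem integral_Iic_exp_mul_sub {c : ℝ} (hc : 0 < c) (s p : ℝ) :
    ∫ x in Iic s, exp (c * (x - p)) = exp (c * (s - p)) / c := by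
  simp_rw [exp_mul_sub]
  rw [integral_mul_const, integral_exp_mul_Iic hc]
  ring

theorem integral_exp_mul_sub {c : ℝ} (hc : c ≠ 0) (a b p : ℝ) :
    ∫ x in a..b, exp (c * (x - p)) = (exp (c * (b - p)) - exp (c * (a - p))) / c := by
  simp only [mul_sub]
  rw [intervalIntegral.integral_comp_mul_sub exp hc, integral_exp, smul_eq_mul]
  ring

theorem withDensity_ofReal_apply_eq_integral {α : Type*} [MeasurableSpace α] {μ : Measure α}
    {f : α → ℝ} {s : Set α} (hf : Integrable f μ) (hf0 : 0 ≤ᵐ[μ] f) (hs : MeasurableSet s) :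
    μ.withDensity (fun x => ENNReal.ofReal (f x)) s = ENNReal.ofReal (∫ x in s, f x ∂μ) := by
  rw [withDensity_apply _ hs,
    ofReal_integral_eq_lintegral_ofReal hf.integrableOn (ae_restrict_of_ae hf0)]

theorem MeasureTheory.Integrable.continuous_setIntegral_Iic {E : Type*} [NormedAddCommGroup E]
    [NormedSpace ℝ E] {f : ℝ → E} (hf : Integrable f) :
    Continuous fun b => ∫ x in Iic b, f x := by
  have hsplit : (fun b => ∫ x in Iic b, f x) = fun b => (∫ x in Iic 0, f x) + ∫ x in 0..b, f x := by
    ext b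
    rw [← intervalIntegral.integral_Iic_sub_Iic hf.integrableOn hf.integrableOn]
    abel
  rw [hsplit]
  exact continuous_const.add
    (intervalIntegral.continuous_primitive (fun _ _ => hf.intervalIntegrable) 0)

namespace LogConcave

variable {h : ℝ → ℝ}

theorem comp_neg (hlc : LogConcave h) : LogConcave fun x => h (-x) := by
  intro x y α hα
  simpa only [mul_neg, ← neg_add] using hlc (-x) (-y) α hα

theorem exp_interpolate_log_le (hlc : LogConcave h) {x s y : ℝ} (hx : 0 < h x) (hy : 0 < h y)
    (hxs : x ≤ s) (hsy : s ≤ y) (hxy : x < y) :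
    exp (((y - s) * log (h x) + (s - x) * log (h y)) / (y - x)) ≤ h s := by
  have hyx : 0 < y - x := sub_pos.2 hxy
  set α := (y - s) / (y - x) with hα_def
  have hα : α ∈ Icc (0:ℝ) 1 :=
    ⟨div_nonneg (sub_nonneg.2 hsy) hyx.le, div_le_one_of_le₀ (by linarith) hyx.le⟩
  have hs : α * x + (1 - α) * y = s := by
    rw [hα_def]
    field_simp
    ring
  calc exp (((y - s) * log (h x) + (s - x) * log (h y)) / (y - x))
      = h x ^ α * h y ^ (1 - α) := by
        rw [rpow_def_of_pos hx, rpow_def_of_pos hy, ← exp_add]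
        congr 1
        rw [hα_def]
        field_simp
        ring
    _ ≤ h s := hs ▸ hlc x y α hα

/- Chord slopes of the concave function `log h` towards `p` decrease, so an exponential bound at
`s` propagates to the left of `s`, and the reverse bound to `[s, p]`. -/
theorem le_mul_exp_of_le_mul_exp (hlc : LogConcave h) {x s p c : ℝ} (hxs : x ≤ s) (hsp : s < p)
    (hp : 0 < h p) (hs : h s ≤ h p * exp (c * (s - p))) : h x ≤ h p * exp (c * (x - p)) := by
  rcases le_or_gt (h x) 0 with hx | hx
  · exact hx.trans (by positivity)
  have hpx : 0 < p - x := by linarith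
  have hcombo := (hlc.exp_interpolate_log_le hx hp hxs hsp.le (hxs.trans_lt hsp)).trans hs
  rw [mul_exp_eq_exp_log_add hp, exp_le_exp, div_le_iff₀ hpx] at hcombo
  have hlog : log (h x) ≤ log (h p) + c * (x - p) := by
    refine le_of_mul_le_mul_left ?_ (sub_pos.2 hsp)
    linear_combination hcombo
  calc h x = exp (log (h x)) := (exp_log hx).symm
    _ ≤ exp (log (h p) + c * (x - p)) := exp_le_exp.2 hlog
    _ = h p * exp (c * (x - p)) := (mul_exp_eq_exp_log_add hp _).symm

theorem mul_exp_le_of_mul_exp_le (hlc : LogConcave h) {s y p c : ℝ} (hsy : s ≤ y) (hyp : y ≤ p)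
    (hsp : s < p) (hp : 0 < h p) (hs : h p * exp (c * (s - p)) ≤ h s) :
    h p * exp (c * (y - p)) ≤ h y := by
  have hs0 : 0 < h s := lt_of_lt_of_le (by positivity) hs
  have hlog : log (h p) + c * (s - p) ≤ log (h s) := by
    rwa [← exp_le_exp, ← mul_exp_eq_exp_log_add hp, exp_log hs0]
  calc h p * exp (c * (y - p)) = exp (log (h p) + c * (y - p)) := mul_exp_eq_exp_log_add hp _
    _ ≤ exp (((p - y) * log (h s) + (y - s) * log (h p)) / (p - s)) := by
        rw [exp_le_exp, le_div_iff₀ (sub_pos.2 hsp)]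
        linear_combination mul_le_mul_of_nonneg_left hlog (sub_nonneg.2 hyp)
    _ ≤ h y := hlc.exp_interpolate_log_le hs0 hp hsy hyp hsp

theorem setIntegral_Iic_le (hlc : LogConcave h) {s p t : ℝ} (hint : IntegrableOn h (Iic s))
    (hsp : s < p) (ht : 0 < t) (hst : h s ≤ t) (htp : t < h p) :
    ∫ x in Iic s, h x ≤ t * (p - s) / log (h p / t) := by
  have hp : 0 < h p := ht.trans htp
  set c := log (h p / t) / (p - s)
  have hc : 0 < c := div_pos (log_pos ((one_lt_div ht).2 htp)) (sub_pos.2 hsp)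
  have hpass : h p * exp (c * (s - p)) = t := mul_exp_log_div_mul_sub hp ht hsp.ne
  calc ∫ x in Iic s, h x ≤ ∫ x in Iic s, h p * exp (c * (x - p)) :=
        setIntegral_mono_on hint ((integrableOn_Iic_exp_mul_sub hc s p).const_mul _)
          measurableSet_Iic fun x hx =>
            hlc.le_mul_exp_of_le_mul_exp hx hsp hp (hst.trans_eq hpass.symm)
    _ = t / c := by rw [integral_const_mul, integral_Iic_exp_mul_sub hc, mul_div_assoc', hpass]
    _ = t * (p - s) / log (h p / t) := div_div_eq_mul_div _ _ _

theorem le_intervalIntegral (hlc : LogConcave h) {s p t : ℝ}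
    (hint : IntervalIntegrable h volume s p)
    (hsp : s < p) (ht : 0 < t) (hts : t ≤ h s) (htp : t < h p) :
    (h p - t) * (p - s) / log (h p / t) ≤ ∫ x in s..p, h x := by
  have hp : 0 < h p := ht.trans htp
  set c := log (h p / t) / (p - s)
  have hc : 0 < c := div_pos (log_pos ((one_lt_div ht).2 htp)) (sub_pos.2 hsp)
  have hpass : h p * exp (c * (s - p)) = t := mul_exp_log_div_mul_sub hp ht hsp.ne
  calc (h p - t) * (p - s) / log (h p / t) = (h p - t) / c := (div_div_eq_mul_div _ _ _).symm
    _ = ∫ x in s..p, h p * exp (c * (x - p)) := by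
        rw [intervalIntegral.integral_const_mul, integral_exp_mul_sub hc.ne', sub_self, mul_zero,
          exp_zero, mul_div_assoc', mul_sub, mul_one, hpass]
    _ ≤ ∫ x in s..p, h x :=
        intervalIntegral.integral_mono_on hsp.le
          (Continuous.intervalIntegrable (by fun_prop) _ _) hint fun y hy =>
          hlc.mul_exp_le_of_mul_exp_le hy.1 hy.2 hsp hp (hpass.trans_le hts)

/- `{x | h x ≤ t}` need not be measurable, so the bounds are stated for measurable supersets. -/
theorem exists_superset_setIntegral_le_Iic (hlc : LogConcave h) (h0 : ∀ x, 0 ≤ h x)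
    (hint : Integrable h) {p t : ℝ} (ht : 0 < t) (htp : t < h p) :
    ∃ A, MeasurableSet A ∧ {x | x < p ∧ h x ≤ t} ⊆ A ∧
      ∫ x in A, h x ≤ t / h p * ∫ x in Iic p, h x := by
  set S := {x | x < p ∧ h x ≤ t}
  rcases S.eq_empty_or_nonempty with hS | hS
  · refine ⟨∅, .empty, hS.subset, ?_⟩
    rw [Measure.restrict_empty, integral_zero_measure]
    exact mul_nonneg (div_nonneg ht.le (ht.trans htp).le)
      (setIntegral_nonneg measurableSet_Iic fun x _ => h0 x)
  set F := fun b => ∫ x in Iic b, h x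
  set L := log (h p / t)
  have hF : Continuous F := hint.continuous_setIntegral_Iic
  have hbdd : BddAbove S := ⟨p, fun x hx => hx.1.le⟩
  set a := sSup S
  have hap : a ≤ p := csSup_le hS fun x hx => hx.1.le
  have upper : F a ≤ t * (p - a) / L :=
    (isClosed_le hF (by fun_prop)).closure_subset_iff.2
      (fun s hs => hlc.setIntegral_Iic_le hint.integrableOn hs.1 ht hs.2 htp)
      (csSup_mem_closure hS hbdd)
  have lower : (h p - t) * (p - a) / L ≤ F p - F a := by
    rcases hap.eq_or_lt with hap | hap
    · simp [hap]
    have hclosed : IsClosed {s | (h p - t) * (p - s) / L ≤ F p - F s} :=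
      isClosed_le (by fun_prop) (continuous_const.sub hF)
    refine hclosed.closure_subset_iff.2 (fun s hs => ?_)
      ((closure_Ioo hap.ne).symm ▸ left_mem_Icc.2 hap.le)
    have hts : t < h s := not_le.1 fun hst => (le_csSup hbdd ⟨hs.2, hst⟩).not_gt hs.1
    rw [mem_ofPred_eq, intervalIntegral.integral_Iic_sub_Iic hint.integrableOn hint.integrableOn]
    exact hlc.le_intervalIntegral hint.intervalIntegrable hs.2 ht hts.le htp
  refine ⟨Iic a, measurableSet_Iic, fun x hx => le_csSup hbdd hx, ?_⟩
  have key : (h p - t) * F a ≤ t * (F p - F a) := calc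
    (h p - t) * F a ≤ (h p - t) * (t * (p - a) / L) :=
        mul_le_mul_of_nonneg_left upper (sub_nonneg.2 htp.le)
    _ = t * ((h p - t) * (p - a) / L) := by ring
    _ ≤ t * (F p - F a) := mul_le_mul_of_nonneg_left lower ht.le
  rw [div_mul_eq_mul_div, le_div_iff₀ (ht.trans htp)]
  linarith

theorem exists_superset_setIntegral_le_Ioi (hlc : LogConcave h) (h0 : ∀ x, 0 ≤ h x)
    (hint : Integrable h) {p t : ℝ} (ht : 0 < t) (htp : t < h p) :
    ∃ A, MeasurableSet A ∧ {x | p < x ∧ h x ≤ t} ⊆ A ∧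
      ∫ x in A, h x ≤ t / h p * ∫ x in Ioi p, h x := by
  obtain ⟨A, hA, hSA, hAint⟩ := hlc.comp_neg.exists_superset_setIntegral_le_Iic
    (fun x => h0 (-x)) hint.comp_neg (p := -p) ht (by simpa using htp)
  refine ⟨Neg.neg ⁻¹' A, hA.preimage measurable_neg,
    fun x hx => hSA ⟨neg_lt_neg hx.1, by simpa using hx.2⟩, ?_⟩
  calc ∫ x in Neg.neg ⁻¹' A, h x = ∫ y in A, h (-y) := by
        simpa using (Measure.measurePreserving_neg volume).setIntegral_preimage_emb
          measurableEmbedding_neg (fun y => h (-y)) A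
    _ ≤ t / h (-(-p)) * ∫ x in Iic (-p), h (-x) := hAint
    _ = t / h p * ∫ x in Ioi p, h x := by rw [integral_comp_neg_Iic, neg_neg]

theorem withDensity_sublevel_le_of_lt (hlc : LogConcave h) (h0 : ∀ x, 0 ≤ h x)
    (hint : Integrable h) {p t : ℝ} (ht : 0 < t) (htp : t < h p) :
    volume.withDensity (fun x => ENNReal.ofReal (h x)) {x | h x ≤ t} ≤
      ENNReal.ofReal (t / h p * ∫ x, h x) := by
  set ν := volume.withDensity (fun x => ENNReal.ofReal (h x))
  obtain ⟨A, hA, hSA, hAint⟩ := hlc.exists_superset_setIntegral_le_Iic h0 hint ht htp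
  obtain ⟨B, hB, hSB, hBint⟩ := hlc.exists_superset_setIntegral_le_Ioi h0 hint ht htp
  have hcover : {x | h x ≤ t} ⊆ A ∪ B := by
    intro x hx
    rcases lt_trichotomy x p with hxp | rfl | hpx
    · exact Or.inl (hSA ⟨hxp, hx⟩)
    · exact absurd hx htp.not_ge
    · exact Or.inr (hSB ⟨hpx, hx⟩)
  have hρ : 0 ≤ t / h p := div_nonneg ht.le (ht.trans htp).le
  have h0' : 0 ≤ᵐ[volume] h := ae_of_all _ h0
  calc ν {x | h x ≤ t} ≤ ν A + ν B := (measure_mono hcover).trans (measure_union_le A B)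
    _ = ENNReal.ofReal (∫ x in A, h x) + ENNReal.ofReal (∫ x in B, h x) := by
        rw [withDensity_ofReal_apply_eq_integral hint h0' hA,
          withDensity_ofReal_apply_eq_integral hint h0' hB]
    _ ≤ ENNReal.ofReal (t / h p * ∫ x in Iic p, h x) +
          ENNReal.ofReal (t / h p * ∫ x in Ioi p, h x) :=
        add_le_add (ENNReal.ofReal_le_ofReal hAint) (ENNReal.ofReal_le_ofReal hBint)
    _ = ENNReal.ofReal (t / h p * ∫ x, h x) := by
        rw [← ENNReal.ofReal_add
          (mul_nonneg hρ (setIntegral_nonneg measurableSet_Iic fun x _ => h0 x))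
          (mul_nonneg hρ (setIntegral_nonneg measurableSet_Ioi fun x _ => h0 x)), ← mul_add,
          intervalIntegral.integral_Iic_add_Ioi hint.integrableOn hint.integrableOn]

theorem withDensity_sublevel_le_of_isLUB (hlc : LogConcave h) (h0 : ∀ x, 0 ≤ h x)
    (hint : Integrable h) {M t : ℝ} (hM : IsLUB (range h) M) (hM0 : 0 < M) (ht : 0 ≤ t) :
    volume.withDensity (fun x => ENNReal.ofReal (h x)) {x | h x ≤ t} ≤
      ENNReal.ofReal (t / M * ∫ x, h x) := by
  set ν := volume.withDensity (fun x => ENNReal.ofReal (h x))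
  have hI : 0 ≤ ∫ x, h x := integral_nonneg h0
  rcases le_or_gt M t with hMt | htM
  · calc ν {x | h x ≤ t} ≤ ν univ := measure_mono (subset_univ _)
      _ = ENNReal.ofReal (∫ x, h x) := by
          rw [withDensity_ofReal_apply_eq_integral hint (ae_of_all _ h0) .univ, setIntegral_univ]
      _ ≤ ENNReal.ofReal (t / M * ∫ x, h x) :=
          ENNReal.ofReal_le_ofReal (le_mul_of_one_le_left hI ((one_le_div hM0).2 hMt))
  have hlim : Tendsto (fun m => ENNReal.ofReal ((t + (M - m)) / m * ∫ x, h x)) (𝓝[<] M)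
      (𝓝 (ENNReal.ofReal (t / M * ∫ x, h x))) := by
    have hcont : ContinuousAt (fun m => (t + (M - m)) / m * ∫ x, h x) M := by
      fun_prop (disch := exact hM0.ne')
    simpa [Function.comp_def] using
      ((ENNReal.continuous_ofReal.tendsto _).comp hcont.tendsto).mono_left nhdsWithin_le_nhds
  -- compare with the level `t + (M - m)`, which lies strictly between `t` and `m < h p`
  refine ge_of_tendsto hlim ?_
  filter_upwards [Ioo_mem_nhdsLT (show (t + M) / 2 < M by linarith)] with m hm
  obtain ⟨_, ⟨p, rfl⟩, hmp, -⟩ := hM.exists_between hm.2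
  have ht' : 0 < t + (M - m) := by linarith [hm.2]
  have htm : t + (M - m) < m := by linarith [hm.1]
  calc ν {x | h x ≤ t} ≤ ν {x | h x ≤ t + (M - m)} :=
        measure_mono fun x (hx : h x ≤ t) => hx.trans (by linarith [hm.2])
    _ ≤ ENNReal.ofReal ((t + (M - m)) / h p * ∫ x, h x) :=
        hlc.withDensity_sublevel_le_of_lt h0 hint ht' (htm.trans hmp)
    _ ≤ ENNReal.ofReal ((t + (M - m)) / m * ∫ x, h x) :=
        ENNReal.ofReal_le_ofReal (mul_le_mul_of_nonneg_right
          (div_le_div_of_nonneg_left ht'.le (ht'.trans htm) hmp.le) hI)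

end LogConcave

/-- (Lovász–Vempala, Lemma 5.6(a).) Let `h : ℝ → [0,∞)` be an
integrable log-concave function with `∫ h > 0` and supremum `M_h < ∞`, and let `X` have
density proportional to `h`.  Then for every `t ≥ 0`, `P(h(X) ≤ t) ≤ t / M_h`. -/
theorem logconcave_density_small_value_tail
    (h : ℝ → ℝ) (h0 : ∀ x, 0 ≤ h x)
    (hlogconc : ∀ x y : ℝ, ∀ α : ℝ, α ∈ Set.Icc (0:ℝ) 1 →
      h x ^ α * h y ^ (1 - α) ≤ h (α * x + (1 - α) * y))
    (hint : Integrable h) (hpos : 0 < ∫ x, h x)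
    (Mh : ℝ) (hMh : IsLUB (Set.range h) Mh) :
    ∀ t : ℝ, 0 ≤ t →
      ((ENNReal.ofReal (∫ x, h x))⁻¹ •
          volume.withDensity (fun x => ENNReal.ofReal (h x))) {x | h x ≤ t}
        ≤ ENNReal.ofReal (t / Mh) := by
  intro t ht
  have hM0 : 0 < Mh := by
    by_contra! hM
    exact hpos.not_ge (integral_nonpos fun x => (hMh.1 ⟨x, rfl⟩).trans hM)
  rw [Measure.smul_apply, smul_eq_mul, ENNReal.inv_mul_le_iff (ENNReal.ofReal_pos.2 hpos).ne'
    ENNReal.ofReal_ne_top, ← ENNReal.ofReal_mul hpos.le, mul_comm]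
  exact LogConcave.withDensity_sublevel_le_of_isLUB hlogconc h0 hint hMh hM0 ht
end

section
/- Let β ≥ 0, let ℓ = [x̲, x̄] ⊂ ℝ be a bounded segment, and let g : ℓ → [0,∞) be an integrable β-log-concave function with ∫_ℓ g > 0, sandwiched by a log-concave function h on ℓ with e^{−β} h(x) ≤ g(x) ≤ h(x) for all x ∈ ℓ. Let p ∈ ℓ satisfy g(p) ≥ e^{−3β} sup_{z∈ℓ} g(z), let ε̃ ∈ (0, e^{−2β}/2), and let e_{−1} ≤ p ≤ e_1 be points of ℓ such that: either e_{−1} = x̲ and g(x̲) ≥ (1/2)e^{−β} ε̃ g(p), or (1/2)e^{−β} ε̃ g(p) ≤ g(e_{−1}) ≤ ε̃ g(p); and symmetrically either e_1 = x̄ and g(x̄) ≥ (1/2)e^{−β} ε̃ g(p), or (1/2)e^{−β} ε̃ g(p) ≤ g(e_1) ≤ ε̃ g(p). Then the total variation distance between π_{g,ℓ} (the probability measure on ℓ with density proportional to g) and its conditioning to the interval [e_{−1}, e_1] satisfies d_tv(π_{g,ℓ}, π_{g,ℓ}(· | [e_{−1}, e_1])) ≤ 3 e^{2β} ε̃. 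-/
/-!
For `p ≤ e ≤ t`, the points `e` and `t - (e - p)` are mirror images inside `[p, t]`, so
applying `β`-log-concavity to both and multiplying gives
`e^{-2β} g(p) g(t) ≤ g(e) g(t - (e - p))`. When `g(e) ≤ ε̃ g(p)` this yields
`g(t) ≤ ρ g(t - (e - p))` with `ρ = e^{2β} ε̃ ≤ 1/2`, so the mass of `g` beyond `e` is at most
`ρ` times the mass beyond `p`, hence at most `2ρ` times the mass of `[p, e]`; the left tail is
the same statement for `x ↦ g(-x)`. So `[e₋₁, e₁]` carries all but a fraction `2ρ` of the
mass, and conditioning a probability measure on an event `A` moves it by at most `μ(Aᶜ)` in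
total variation.
-/

open MeasureTheory

/-- Total variation distance between two measures:
`d_tv(μ, ν) = sup_B |μ(B) − ν(B)|` over measurable sets `B`. -/
noncomputable def tvDist {X : Type*} [MeasurableSpace X] (μ ν : Measure X) : ℝ :=
  ⨆ s : {s : Set X // MeasurableSet s}, |(μ s).toReal - (ν s).toReal|

open Set Real ProbabilityTheory

def BetaLogConcaveOn (β : ℝ) (s : Set ℝ) (g : ℝ → ℝ) : Prop :=
  ∀ x ∈ s, ∀ y ∈ s, ∀ α ∈ Icc (0 : ℝ) 1,
    exp (-β) * (g x ^ α * g y ^ (1 - α)) ≤ g (α * x + (1 - α) * y)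

namespace BetaLogConcaveOn

variable {β : ℝ} {s t : Set ℝ} {g : ℝ → ℝ}

theorem mono (hg : BetaLogConcaveOn β s g) (hts : t ⊆ s) : BetaLogConcaveOn β t g :=
  fun x hx y hy α hα => hg x (hts hx) y (hts hy) α hα

theorem comp_neg (hg : BetaLogConcaveOn β s g) : BetaLogConcaveOn β (-s) (fun x => g (-x)) := by
  intro x hx y hy α hα
  have h := hg (-x) hx (-y) hy α hα
  rwa [show α * -x + (1 - α) * -y = -(α * x + (1 - α) * y) by ring] at h

theorem mul_le_mul_comb_swap (hg : BetaLogConcaveOn β s g) (hg0 : ∀ x ∈ s, 0 ≤ g x)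
    {x y : ℝ} (hx : x ∈ s) (hy : y ∈ s) {α : ℝ} (hα : α ∈ Icc (0 : ℝ) 1) :
    exp (-(2 * β)) * (g x * g y) ≤
      g (α * x + (1 - α) * y) * g ((1 - α) * x + (1 - (1 - α)) * y) := by
  have h₁ := hg x hx y hy α hα
  have h₂ := hg x hx y hy (1 - α) ⟨by linarith [hα.2], by linarith [hα.1]⟩
  have hsplit : ∀ z ∈ s, g z = g z ^ α * g z ^ (1 - α) := fun z hz => by
    rw [← rpow_add' (hg0 z hz) (by norm_num), add_sub_cancel, rpow_one]
  have hmean_nonneg : ∀ γ : ℝ, 0 ≤ exp (-β) * (g x ^ γ * g y ^ (1 - γ)) := fun γ =>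
    mul_nonneg (exp_pos _).le (mul_nonneg (rpow_nonneg (hg0 x hx) _) (rpow_nonneg (hg0 y hy) _))
  calc exp (-(2 * β)) * (g x * g y)
      = (exp (-β) * (g x ^ α * g y ^ (1 - α))) *
          (exp (-β) * (g x ^ (1 - α) * g y ^ (1 - (1 - α)))) := by
        rw [sub_sub_cancel, show -(2 * β) = -β + -β by ring, exp_add]
        conv_lhs => rw [hsplit x hx, hsplit y hy]
        ring
    _ ≤ _ := mul_le_mul h₁ h₂ (hmean_nonneg _) ((hmean_nonneg α).trans h₁)

theorem mul_le_mul_mirror (hg : BetaLogConcaveOn β s g) (hg0 : ∀ x ∈ s, 0 ≤ g x)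
    {p e t : ℝ} (hp : p ∈ s) (ht : t ∈ s) (hpe : p ≤ e) (het : e ≤ t) :
    exp (-(2 * β)) * (g p * g t) ≤ g e * g (p + t - e) := by
  obtain ⟨α, γ, hα, hγ, hαγ, rfl⟩ : e ∈ segment ℝ p t := by
    rw [segment_eq_Icc (hpe.trans het)]; exact ⟨hpe, het⟩
  obtain rfl : γ = 1 - α := by linarith
  convert hg.mul_le_mul_comb_swap hg0 hp ht ⟨hα, by linarith⟩ using 3 <;> ring

variable {ε p e b : ℝ}

theorem integral_tail_le (hg : BetaLogConcaveOn β (Icc p b) g) (hg0 : ∀ x ∈ Icc p b, 0 ≤ g x)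
    (hint : IntervalIntegrable g volume p b) (hpe : p ≤ e) (heb : e ≤ b) (hgp : 0 < g p)
    (hge : g e ≤ ε * g p) (hρ : exp (2 * β) * ε ≤ 1 / 2) :
    ∫ t in e..b, g t ≤ 2 * (exp (2 * β) * ε) * ∫ t in p..e, g t := by
  set ρ := exp (2 * β) * ε
  have hp_mem : p ∈ Icc p b := left_mem_Icc.2 (hpe.trans heb)
  have he_mem : e ∈ Icc p b := ⟨hpe, heb⟩
  have hb_mem : b ∈ Icc p b := right_mem_Icc.2 (hpe.trans heb)
  have hint' : ∀ x ∈ Icc p b, ∀ y ∈ Icc p b, IntervalIntegrable g volume x y :=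
    fun x hx y hy => hint.mono_set (uIcc_subset_uIcc (Icc_subset_uIcc hx) (Icc_subset_uIcc hy))
  have hρ0 : 0 ≤ ρ :=
    mul_nonneg (exp_pos _).le (nonneg_of_mul_nonneg_left ((hg0 e he_mem).trans hge) hgp)
  have hshift : ∀ t ∈ Icc e b, g t ≤ ρ * g (t - (e - p)) := by
    intro t ht
    have hts : t - (e - p) ∈ Icc p b := ⟨by linarith [ht.1], by linarith [ht.2]⟩
    have h := hg.mul_le_mul_mirror hg0 hp_mem ⟨hpe.trans ht.1, ht.2⟩ hpe ht.1
    rw [show p + t - e = t - (e - p) by ring] at h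
    have h' : g p * (exp (-(2 * β)) * g t) ≤ g p * (ε * g (t - (e - p))) := by
      nlinarith [mul_le_mul_of_nonneg_right hge (hg0 _ hts)]
    calc g t = exp (2 * β) * (exp (-(2 * β)) * g t) := by
          rw [← mul_assoc, ← exp_add, add_neg_cancel, exp_zero, one_mul]
      _ ≤ exp (2 * β) * (ε * g (t - (e - p))) :=
          mul_le_mul_of_nonneg_left (le_of_mul_le_mul_left h' hgp) (exp_pos _).le
      _ = ρ * g (t - (e - p)) := by ring
  have hint_shift : IntervalIntegrable (fun t => g (t - (e - p))) volume e b := by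
    have h := (hint' p hp_mem (b - (e - p)) ⟨by linarith, by linarith⟩).comp_sub_right (e - p)
    rwa [add_sub_cancel, sub_add_cancel] at h
  have hJ : ∫ t in e..b, g t ≤ ρ * ((∫ t in p..e, g t) + ∫ t in e..b, g t) :=
    calc ∫ t in e..b, g t ≤ ∫ t in e..b, ρ * g (t - (e - p)) :=
          intervalIntegral.integral_mono_on heb (hint' e he_mem b hb_mem)
            (hint_shift.const_mul ρ) hshift
      _ = ρ * ∫ t in p..b - (e - p), g t := by
          rw [intervalIntegral.integral_const_mul, intervalIntegral.integral_comp_sub_right,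
            sub_sub_cancel]
      _ ≤ ρ * ∫ t in p..b, g t := by
          refine mul_le_mul_of_nonneg_left ?_ hρ0
          refine intervalIntegral.integral_mono_interval le_rfl ?_ ?_
            (ae_restrict_of_forall_mem measurableSet_Ioc fun x hx => hg0 x (Ioc_subset_Icc_self hx))
            hint <;> linarith
      _ = ρ * ((∫ t in p..e, g t) + ∫ t in e..b, g t) := by
          rw [intervalIntegral.integral_add_adjacent_intervals (hint' p hp_mem e he_mem)
            (hint' e he_mem b hb_mem)]
  have hJ0 : 0 ≤ ∫ t in e..b, g t :=
    intervalIntegral.integral_nonneg heb fun x hx => hg0 x ⟨hpe.trans hx.1, hx.2⟩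
  nlinarith

theorem integral_tail_le_left (hg : BetaLogConcaveOn β (Icc b p) g)
    (hg0 : ∀ x ∈ Icc b p, 0 ≤ g x) (hint : IntervalIntegrable g volume b p) (hbe : b ≤ e)
    (hep : e ≤ p) (hgp : 0 < g p) (hge : g e ≤ ε * g p) (hρ : exp (2 * β) * ε ≤ 1 / 2) :
    ∫ t in b..e, g t ≤ 2 * (exp (2 * β) * ε) * ∫ t in e..p, g t := by
  have h := integral_tail_le (g := fun x => g (-x)) (p := -p) (e := -e) (b := -b)
    (by rw [← neg_Icc]; exact hg.comp_neg)
    (fun x hx => hg0 (-x) ⟨by linarith [hx.2], by linarith [hx.1]⟩)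
    ((IntervalIntegrable.iff_comp_neg (f := g)).1 hint).symm (by linarith) (by linarith)
    (by rwa [neg_neg]) (by rwa [neg_neg, neg_neg]) hρ
  simpa only [intervalIntegral.integral_comp_neg, neg_neg] using h

theorem integral_Icc_le_of_stopping_points {a em e1 : ℝ}
    (hg : BetaLogConcaveOn β (Icc a b) g)
    (hg0 : ∀ x ∈ Icc a b, 0 ≤ g x) (hint : IntegrableOn g (Icc a b)) (hp : p ∈ Icc a b)
    (hgp : 0 < g p) (hε : 0 ≤ ε) (hρ : exp (2 * β) * ε ≤ 1 / 2)
    (hem : em ∈ Icc a b) (he1 : e1 ∈ Icc a b) (hpem : em ≤ p) (hpe1 : p ≤ e1)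
    (hcm : em = a ∨ g em ≤ ε * g p) (hc1 : e1 = b ∨ g e1 ≤ ε * g p) :
    ∫ x in Icc a b, g x ≤ (1 + 2 * (exp (2 * β) * ε)) * ∫ x in Icc em e1, g x := by
  set ρ := exp (2 * β) * ε
  have hρ0 : 0 ≤ ρ := by positivity
  have ha : a ∈ Icc a b := left_mem_Icc.2 (hp.1.trans hp.2)
  have hb : b ∈ Icc a b := right_mem_Icc.2 (hp.1.trans hp.2)
  have hint' : ∀ x ∈ Icc a b, ∀ y ∈ Icc a b, IntervalIntegrable g volume x y :=
    fun x hx y hy => (hint.mono_set (uIcc_subset_Icc hx hy)).intervalIntegrable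
  have hnonneg : ∀ x y, a ≤ x → x ≤ y → y ≤ b → 0 ≤ ∫ t in x..y, g t :=
    fun x y hax hxy hyb => intervalIntegral.integral_nonneg hxy
      fun t ht => hg0 t ⟨hax.trans ht.1, ht.2.trans hyb⟩
  have hL : ∫ t in a..em, g t ≤ 2 * ρ * ∫ t in em..p, g t := by
    rcases hcm with rfl | hge
    · rw [intervalIntegral.integral_same]
      exact mul_nonneg (mul_nonneg zero_le_two hρ0) (hnonneg _ _ le_rfl hpem hp.2)
    · exact (hg.mono (Icc_subset_Icc le_rfl hp.2)).integral_tail_le_left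
        (fun x hx => hg0 x ⟨hx.1, hx.2.trans hp.2⟩) (hint' a ha p hp)
        hem.1 hpem hgp hge hρ
  have hR : ∫ t in e1..b, g t ≤ 2 * ρ * ∫ t in p..e1, g t := by
    rcases hc1 with rfl | hge
    · rw [intervalIntegral.integral_same]
      exact mul_nonneg (mul_nonneg zero_le_two hρ0) (hnonneg _ _ hp.1 hpe1 le_rfl)
    · exact (hg.mono (Icc_subset_Icc hp.1 le_rfl)).integral_tail_le
        (fun x hx => hg0 x ⟨hp.1.trans hx.1, hx.2⟩) (hint' p hp b hb)
        hpe1 he1.2 hgp hge hρ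
  have hIcc : ∀ x y, x ≤ y → ∫ t in Icc x y, g t = ∫ t in x..y, g t := fun x y hxy => by
    rw [integral_Icc_eq_integral_Ioc, intervalIntegral.integral_of_le hxy]
  rw [hIcc a b (hp.1.trans hp.2), hIcc em e1 (hpem.trans hpe1),
    ← intervalIntegral.integral_add_adjacent_intervals (hint' a ha em hem) (hint' em hem b hb),
    ← intervalIntegral.integral_add_adjacent_intervals (hint' em hem p hp) (hint' p hp b hb),
    ← intervalIntegral.integral_add_adjacent_intervals (hint' p hp e1 he1) (hint' e1 he1 b hb),
    ← intervalIntegral.integral_add_adjacent_intervals (hint' em hem p hp) (hint' p hp e1 he1)]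
  linarith

end BetaLogConcaveOn

section NormalizedDensity

variable {X : Type*} [MeasurableSpace X] {ν : Measure X} {S s : Set X} {g : X → ℝ}

noncomputable def normalizedWithDensity (ν : Measure X) (S : Set X) (g : X → ℝ) : Measure X :=
  (ENNReal.ofReal (∫ x in S, g x ∂ν))⁻¹ •
    ((ν.restrict S).withDensity fun x => ENNReal.ofReal (g x))

theorem normalizedWithDensity_apply (hS : MeasurableSet S) (hint : IntegrableOn g S ν)
    (hg0 : ∀ x ∈ S, 0 ≤ g x) (hs : MeasurableSet s) :
    normalizedWithDensity ν S g s =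
      (ENNReal.ofReal (∫ x in S, g x ∂ν))⁻¹ * ENNReal.ofReal (∫ x in s ∩ S, g x ∂ν) := by
  rw [normalizedWithDensity, Measure.smul_apply, smul_eq_mul, withDensity_apply _ hs,
    Measure.restrict_restrict hs, ofReal_integral_eq_lintegral_ofReal
      (hint.mono_set inter_subset_right)
      (ae_restrict_of_forall_mem (hs.inter hS) fun x hx => hg0 x hx.2)]

theorem isProbabilityMeasure_normalizedWithDensity (hS : MeasurableSet S)
    (hint : IntegrableOn g S ν) (hg0 : ∀ x ∈ S, 0 ≤ g x) (hpos : 0 < ∫ x in S, g x ∂ν) :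
    IsProbabilityMeasure (normalizedWithDensity ν S g) := by
  constructor
  rw [normalizedWithDensity_apply hS hint hg0 MeasurableSet.univ, univ_inter,
    ENNReal.inv_mul_cancel (ENNReal.ofReal_pos.2 hpos).ne' ENNReal.ofReal_ne_top]

theorem normalizedWithDensity_real_apply (hS : MeasurableSet S) (hint : IntegrableOn g S ν)
    (hg0 : ∀ x ∈ S, 0 ≤ g x) (hs : MeasurableSet s) (hsS : s ⊆ S) :
    (normalizedWithDensity ν S g).real s = (∫ x in s, g x ∂ν) / ∫ x in S, g x ∂ν := by
  rw [measureReal_def, normalizedWithDensity_apply hS hint hg0 hs, inter_eq_left.2 hsS,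
    ENNReal.toReal_mul, ENNReal.toReal_inv, ENNReal.toReal_ofReal (setIntegral_nonneg hS hg0),
    ENNReal.toReal_ofReal (setIntegral_nonneg hs fun x hx => hg0 x (hsS hx)), inv_mul_eq_div]

end NormalizedDensity

theorem tvDist_cond_le_measureReal_compl {X : Type*} [MeasurableSpace X] {μ : Measure X}
    [IsProbabilityMeasure μ] {A : Set X} (hA : MeasurableSet A) (hμA : μ A ≠ 0) :
    tvDist μ μ[|A] ≤ μ.real Aᶜ := by
  refine Real.iSup_le (fun ⟨s, hs⟩ => ?_) measureReal_nonneg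
  set a := μ.real A
  set q := a⁻¹ * μ.real (A ∩ s)
  have ha : 0 < a := ENNReal.toReal_pos hμA (measure_ne_top μ A)
  have hcond : (μ[|A] s).toReal = q := by
    rw [cond_apply hA, ENNReal.toReal_mul, ENNReal.toReal_inv]; rfl
  have hs_split : μ.real (A ∩ s) + μ.real (s \ A) = μ.real s := by
    rw [inter_comm]; exact measureReal_inter_add_sdiff hA
  have hq0 : 0 ≤ q := mul_nonneg (inv_nonneg.2 ha.le) measureReal_nonneg
  have hq1 : q ≤ 1 := inv_mul_le_one_of_le₀ (measureReal_mono inter_subset_left) ha.le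
  have hAs : μ.real (A ∩ s) = a * q := by rw [← mul_assoc, mul_inv_cancel₀ ha.ne', one_mul]
  have hdiff : μ.real (s \ A) ≤ μ.real Aᶜ := measureReal_mono fun x hx => hx.2
  have hcompl : μ.real Aᶜ = 1 - a := probReal_compl_eq_one_sub hA
  have hcompl0 : 0 ≤ 1 - a := hcompl ▸ measureReal_nonneg
  change |μ.real s - (μ[|A] s).toReal| ≤ μ.real Aᶜ
  rw [hcond, ← hs_split, hAs, abs_sub_le_iff]
  constructor <;> nlinarith [mul_nonneg hq0 hcompl0, mul_nonneg (sub_nonneg.2 hq1) hcompl0,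
    (measureReal_nonneg : 0 ≤ μ.real (s \ A))]

theorem pos_of_forall_mul_le_of_setIntegral_pos {X : Type*} [MeasurableSpace X] {ν : Measure X}
    {S : Set X} {g : X → ℝ} {c : ℝ} {p : X} (hc : 0 < c) (hg0 : ∀ x ∈ S, 0 ≤ g x)
    (hmax : ∀ z ∈ S, c * g z ≤ g p) (hpos : 0 < ∫ x in S, g x ∂ν) : 0 < g p := by
  by_contra! hp
  have hzero : ∀ z ∈ S, g z = 0 := fun z hz =>
    le_antisymm (nonpos_of_mul_nonpos_right ((hmax z hz).trans hp) hc) (hg0 z hz)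
  rw [setIntegral_eq_zero_of_forall_eq_zero hzero] at hpos
  exact hpos.false

theorem tvDist_truncation_of_unidimensional_sampler_general
    (β xlo xhi : ℝ) (g : ℝ → ℝ)
    (hg0 : ∀ x ∈ Set.Icc xlo xhi, 0 ≤ g x)
    (hgβ : ∀ x ∈ Set.Icc xlo xhi, ∀ y ∈ Set.Icc xlo xhi, ∀ α : ℝ, α ∈ Set.Icc (0:ℝ) 1 →
      Real.exp (-β) * (g x ^ α * g y ^ (1 - α)) ≤ g (α * x + (1 - α) * y))
    (hgint : IntegrableOn g (Set.Icc xlo xhi))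
    (hgpos : 0 < ∫ x in Set.Icc xlo xhi, g x)
    (p : ℝ) (hp : p ∈ Set.Icc xlo xhi)
    (hpmax : ∀ z ∈ Set.Icc xlo xhi, Real.exp (-3 * β) * g z ≤ g p)
    (ε : ℝ) (hε0 : 0 < ε) (hε1 : ε < Real.exp (-2 * β) / 2)
    (em e1 : ℝ) (hem : em ∈ Set.Icc xlo xhi) (he1 : e1 ∈ Set.Icc xlo xhi)
    (hpem : em ≤ p) (hpe1 : p ≤ e1)
    (hcm : (em = xlo ∧ (1/2) * Real.exp (-β) * ε * g p ≤ g xlo) ∨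
           ((1/2) * Real.exp (-β) * ε * g p ≤ g em ∧ g em ≤ ε * g p))
    (hc1 : (e1 = xhi ∧ (1/2) * Real.exp (-β) * ε * g p ≤ g xhi) ∨
           ((1/2) * Real.exp (-β) * ε * g p ≤ g e1 ∧ g e1 ≤ ε * g p)) :
    tvDist
      ((ENNReal.ofReal (∫ x in Set.Icc xlo xhi, g x))⁻¹ •
        ((volume.restrict (Set.Icc xlo xhi)).withDensity fun x => ENNReal.ofReal (g x)))
      (ProbabilityTheory.cond
        ((ENNReal.ofReal (∫ x in Set.Icc xlo xhi, g x))⁻¹ •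
          ((volume.restrict (Set.Icc xlo xhi)).withDensity fun x => ENNReal.ofReal (g x)))
        (Set.Icc em e1))
      ≤ 3 * Real.exp (2 * β) * ε := by
  have hgp : 0 < g p := pos_of_forall_mul_le_of_setIntegral_pos (exp_pos _) hg0 hpmax hgpos
  have hρ : exp (2 * β) * ε ≤ 1 / 2 := by
    have h := mul_lt_mul_of_pos_left hε1 (exp_pos (2 * β))
    rw [mul_div_assoc', ← exp_add, show 2 * β + -2 * β = 0 by ring, exp_zero] at h
    exact h.le
  have hmass := BetaLogConcaveOn.integral_Icc_le_of_stopping_points hgβ hg0 hgint hp hgp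
    hε0.le hρ hem he1 hpem hpe1 (hcm.imp And.left And.right) (hc1.imp And.left And.right)
  set μ := normalizedWithDensity volume (Icc xlo xhi) g
  have : IsProbabilityMeasure μ :=
    isProbabilityMeasure_normalizedWithDensity measurableSet_Icc hgint hg0 hgpos
  have hμA : μ.real (Icc em e1) = (∫ x in Icc em e1, g x) / ∫ x in Icc xlo xhi, g x :=
    normalizedWithDensity_real_apply measurableSet_Icc hgint hg0 measurableSet_Icc
      (Icc_subset_Icc hem.1 he1.2)
  have hμA_ge : 1 ≤ (1 + 2 * (exp (2 * β) * ε)) * μ.real (Icc em e1) := by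
    rw [hμA, mul_div_assoc', le_div_iff₀ hgpos]; linarith
  have hμA0 : μ (Icc em e1) ≠ 0 := fun h => by
    simp only [measureReal_def, h, ENNReal.toReal_zero, mul_zero] at hμA_ge
    linarith
  change tvDist μ μ[|Icc em e1] ≤ _
  calc tvDist μ μ[|Icc em e1] ≤ μ.real (Icc em e1)ᶜ :=
        tvDist_cond_le_measureReal_compl measurableSet_Icc hμA0
    _ = 1 - μ.real (Icc em e1) := probReal_compl_eq_one_sub measurableSet_Icc
    _ ≤ 3 * exp (2 * β) * ε := by
        have hρ0 : 0 ≤ exp (2 * β) * ε := by positivity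
        nlinarith [mul_le_mul_of_nonneg_left (measureReal_le_one (μ := μ) (s := Icc em e1)) hρ0]

/-- For a `β`-log-concave function `g` on a bounded segment
`ℓ = [x̲, x̄]`, sandwiched by a log-concave `h` with `e^{−β} h ≤ g ≤ h` on `ℓ`, a point
`p ∈ ℓ` with `g(p) ≥ e^{−3β} sup_ℓ g`, an accuracy `ε̃ ∈ (0, e^{−2β}/2)` and points
`em ≤ p ≤ e1` of `ℓ` chosen as in the unidimensional rejection sampler, the total
variation distance between `π_{g,ℓ}` and its conditioning to `[em, e1]` is at most
`3 e^{2β} ε̃`. -/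
theorem tvDist_truncation_of_unidimensional_sampler
    (β xlo xhi : ℝ) (hβ : 0 ≤ β) (g h : ℝ → ℝ)
    (hg0 : ∀ x ∈ Set.Icc xlo xhi, 0 ≤ g x)
    (hgβ : ∀ x ∈ Set.Icc xlo xhi, ∀ y ∈ Set.Icc xlo xhi, ∀ α : ℝ, α ∈ Set.Icc (0:ℝ) 1 →
      Real.exp (-β) * (g x ^ α * g y ^ (1 - α)) ≤ g (α * x + (1 - α) * y))
    (hgint : IntegrableOn g (Set.Icc xlo xhi))
    (hgpos : 0 < ∫ x in Set.Icc xlo xhi, g x)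
    (hh0 : ∀ x ∈ Set.Icc xlo xhi, 0 ≤ h x)
    (hhlogconc : ∀ x ∈ Set.Icc xlo xhi, ∀ y ∈ Set.Icc xlo xhi, ∀ α : ℝ, α ∈ Set.Icc (0:ℝ) 1 →
      h x ^ α * h y ^ (1 - α) ≤ h (α * x + (1 - α) * y))
    (hsand : ∀ x ∈ Set.Icc xlo xhi, Real.exp (-β) * h x ≤ g x ∧ g x ≤ h x)
    (p : ℝ) (hp : p ∈ Set.Icc xlo xhi)
    (hpmax : ∀ z ∈ Set.Icc xlo xhi, Real.exp (-3 * β) * g z ≤ g p)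
    (ε : ℝ) (hε0 : 0 < ε) (hε1 : ε < Real.exp (-2 * β) / 2)
    (em e1 : ℝ) (hem : em ∈ Set.Icc xlo xhi) (he1 : e1 ∈ Set.Icc xlo xhi)
    (hpem : em ≤ p) (hpe1 : p ≤ e1)
    (hcm : (em = xlo ∧ (1/2) * Real.exp (-β) * ε * g p ≤ g xlo) ∨
           ((1/2) * Real.exp (-β) * ε * g p ≤ g em ∧ g em ≤ ε * g p))
    (hc1 : (e1 = xhi ∧ (1/2) * Real.exp (-β) * ε * g p ≤ g xhi) ∨
           ((1/2) * Real.exp (-β) * ε * g p ≤ g e1 ∧ g e1 ≤ ε * g p)) :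
    tvDist
      ((ENNReal.ofReal (∫ x in Set.Icc xlo xhi, g x))⁻¹ •
        ((volume.restrict (Set.Icc xlo xhi)).withDensity fun x => ENNReal.ofReal (g x)))
      (ProbabilityTheory.cond
        ((ENNReal.ofReal (∫ x in Set.Icc xlo xhi, g x))⁻¹ •
          ((volume.restrict (Set.Icc xlo xhi)).withDensity fun x => ENNReal.ofReal (g x)))
        (Set.Icc em e1))
      ≤ 3 * Real.exp (2 * β) * ε :=
  tvDist_truncation_of_unidimensional_sampler_general β xlo xhi g hg0 hgβ hgint hgpos p hp hpmax ε
    hε0 hε1 em e1 hem he1 hpem hpe1 hcm hc1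
end

section
/- Let [a, b] ⊂ ℝ be a nondegenerate interval, let h̃ : [a,b] → ℝ be convex, let β ≥ 0, and let g̃ : [a,b] → ℝ satisfy h̃(x) ≤ g̃(x) ≤ h̃(x) + β for all x ∈ [a,b]. Let x_l = (3a+b)/4, x_c = (a+b)/2 and x_r = (a+3b)/4. If |g̃(x_l) − g̃(x_r)| ≤ β, |g̃(x_l) − g̃(x_c)| ≤ β and |g̃(x_r) − g̃(x_c)| ≤ β, then inf_{x ∈ [a,b]} g̃(x) ≥ min( g̃(x_l), g̃(x_c), g̃(x_r) ) − 3β. In particular the point p ∈ {x_l, x_c, x_r} with the smallest value of g̃ satisfies g̃(p) ≤ inf_{[a,b]} g̃ + 3β. -/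
/-!
Flatness of `g̃` at the quartile points makes the convex minorant `h̃` vary by at most `2β` between
adjacent ones. Each `x ∈ [a,b]` has a quartile point `u` and an adjacent one `v` on the other side
of `u` with `|x - u| ≤ |v - u|`; monotonicity of the secant slopes of `h̃` then gives
`h̃ u ≤ h̃ x + 2β`, and the sandwich `h̃ ≤ g̃ ≤ h̃ + β` costs one more `β`.
-/

open Set

namespace ConvexOn

variable {s : Set ℝ} {f : ℝ → ℝ} {x u v d : ℝ}

theorem le_add_of_le_add_of_sub_le_sub (hf : ConvexOn ℝ s f) (hx : x ∈ s) (hv : v ∈ s)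
    (hxu : x ≤ u) (hgap : u - x ≤ v - u) (hd : 0 ≤ d) (hfv : f v ≤ f u + d) :
    f u ≤ f x + d := by
  rcases hxu.eq_or_lt with rfl | hxu
  · linarith
  have huv : u < v := by linarith
  have hslope := hf.slope_mono_adjacent hx hv hxu huv
  rw [div_le_div_iff₀ (sub_pos.2 hxu) (sub_pos.2 huv)] at hslope
  have : (f u - f x) * (v - u) ≤ d * (v - u) :=
    calc (f u - f x) * (v - u) ≤ (f v - f u) * (u - x) := hslope
      _ ≤ d * (u - x) := by gcongr; linarith
      _ ≤ d * (v - u) := by gcongr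
  linarith [le_of_mul_le_mul_right this (sub_pos.2 huv)]

theorem le_add_of_le_add_of_sub_le_sub' (hf : ConvexOn ℝ s f) (hx : x ∈ s) (hv : v ∈ s)
    (hux : u ≤ x) (hgap : x - u ≤ u - v) (hd : 0 ≤ d) (hfv : f v ≤ f u + d) :
    f u ≤ f x + d := by
  rcases hux.eq_or_lt with rfl | hux
  · linarith
  have hvu : v < u := by linarith
  have hslope := hf.slope_mono_adjacent hv hx hvu hux
  rw [div_le_div_iff₀ (sub_pos.2 hvu) (sub_pos.2 hux)] at hslope
  have : (f u - f x) * (u - v) ≤ d * (u - v) :=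
    calc (f u - f x) * (u - v) ≤ (f v - f u) * (x - u) := by linarith
      _ ≤ d * (x - u) := by gcongr; linarith
      _ ≤ d * (u - v) := by gcongr
  linarith [le_of_mul_le_mul_right this (sub_pos.2 hvu)]

theorem min_quartiles_le_add {a b : ℝ} (hf : ConvexOn ℝ (Icc a b) f) (hd : 0 ≤ d)
    (hlc : |f ((3*a+b)/4) - f ((a+b)/2)| ≤ d) (hrc : |f ((a+3*b)/4) - f ((a+b)/2)| ≤ d)
    (hx : x ∈ Icc a b) :
    min (min (f ((3*a+b)/4)) (f ((a+b)/2))) (f ((a+3*b)/4)) ≤ f x + d := by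
  have ⟨hax, hxb⟩ := hx
  have hl : (3*a+b)/4 ∈ Icc a b := ⟨by linarith, by linarith⟩
  have hc : (a+b)/2 ∈ Icc a b := ⟨by linarith, by linarith⟩
  have hr : (a+3*b)/4 ∈ Icc a b := ⟨by linarith, by linarith⟩
  obtain ⟨hlc₁, hlc₂⟩ := abs_le.mp hlc
  obtain ⟨hrc₁, hrc₂⟩ := abs_le.mp hrc
  rcases le_total x ((a+b)/2) with hxc | hcx
  · rcases le_total x ((3*a+b)/4) with hxl | hlx
    · refine min_le_of_left_le (min_le_of_left_le ?_)
      exact hf.le_add_of_le_add_of_sub_le_sub hx hc hxl (by linarith) hd (by linarith)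
    · refine min_le_of_left_le (min_le_of_right_le ?_)
      exact hf.le_add_of_le_add_of_sub_le_sub hx hr hxc (by linarith) hd (by linarith)
  · rcases le_total x ((a+3*b)/4) with hxr | hrx
    · refine min_le_of_left_le (min_le_of_right_le ?_)
      exact hf.le_add_of_le_add_of_sub_le_sub' hx hl hcx (by linarith) hd (by linarith)
    · refine min_le_of_right_le ?_
      exact hf.le_add_of_le_add_of_sub_le_sub' hx hc hrx (by linarith) hd (by linarith)

end ConvexOn

theorem three_point_flatness_implies_near_optimality_general
    (a b : ℝ) (hab : a < b) (β : ℝ) (hβ : 0 ≤ β)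
    (htil gtil : ℝ → ℝ)
    (hconv : ConvexOn ℝ (Set.Icc a b) htil)
    (hsand : ∀ x ∈ Set.Icc a b, htil x ≤ gtil x ∧ gtil x ≤ htil x + β)
    (hlc : |gtil ((3*a+b)/4) - gtil ((a+b)/2)| ≤ β)
    (hrc : |gtil ((a+3*b)/4) - gtil ((a+b)/2)| ≤ β) :
    (∀ x ∈ Set.Icc a b,
      min (min (gtil ((3*a+b)/4)) (gtil ((a+b)/2))) (gtil ((a+3*b)/4)) - 3*β ≤ gtil x) ∧
    min (min (gtil ((3*a+b)/4)) (gtil ((a+b)/2))) (gtil ((a+3*b)/4))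
      ≤ sInf (gtil '' Set.Icc a b) + 3*β := by
  obtain ⟨hl₁, hl₂⟩ := hsand ((3*a+b)/4) ⟨by linarith, by linarith⟩
  obtain ⟨hc₁, hc₂⟩ := hsand ((a+b)/2) ⟨by linarith, by linarith⟩
  obtain ⟨hr₁, hr₂⟩ := hsand ((a+3*b)/4) ⟨by linarith, by linarith⟩
  have hflat_l : |htil ((3*a+b)/4) - htil ((a+b)/2)| ≤ 2*β := by
    rw [abs_le] at hlc ⊢; constructor <;> linarith
  have hflat_r : |htil ((a+3*b)/4) - htil ((a+b)/2)| ≤ 2*β := by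
    rw [abs_le] at hrc ⊢; constructor <;> linarith
  have hmin : min (min (gtil ((3*a+b)/4)) (gtil ((a+b)/2))) (gtil ((a+3*b)/4)) ≤
      min (min (htil ((3*a+b)/4)) (htil ((a+b)/2))) (htil ((a+3*b)/4)) + β := by
    simp only [← min_add_add_right]
    exact min_le_min (min_le_min hl₂ hc₂) hr₂
  have hlower : ∀ x ∈ Icc a b,
      min (min (gtil ((3*a+b)/4)) (gtil ((a+b)/2))) (gtil ((a+3*b)/4)) - 3*β ≤ gtil x :=
    fun x hx ↦ by
      linarith [hconv.min_quartiles_le_add (by linarith) hflat_l hflat_r hx, (hsand x hx).1]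
  refine ⟨hlower, ?_⟩
  have hne : (gtil '' Icc a b).Nonempty := (nonempty_Icc.2 hab.le).image gtil
  linarith [le_csInf hne (forall_mem_image.2 hlower)]

/-- Let `h̃` be convex on a nondegenerate interval `[a,b]`, `β ≥ 0`, and
`g̃` with `h̃ ≤ g̃ ≤ h̃ + β` on `[a,b]`.  If the values of `g̃` at the three quartile points
`x_l = (3a+b)/4`, `x_c = (a+b)/2`, `x_r = (a+3b)/4` pairwise differ by at most `β`, then
`g̃ ≥ min(g̃(x_l), g̃(x_c), g̃(x_r)) − 3β` on all of `[a,b]`; in particular the best of the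
three points is a `3β`-approximate minimizer of `g̃` on `[a,b]`. -/
theorem three_point_flatness_implies_near_optimality
    (a b : ℝ) (hab : a < b) (β : ℝ) (hβ : 0 ≤ β)
    (htil gtil : ℝ → ℝ)
    (hconv : ConvexOn ℝ (Set.Icc a b) htil)
    (hsand : ∀ x ∈ Set.Icc a b, htil x ≤ gtil x ∧ gtil x ≤ htil x + β)
    (hlr : |gtil ((3*a+b)/4) - gtil ((a+3*b)/4)| ≤ β)
    (hlc : |gtil ((3*a+b)/4) - gtil ((a+b)/2)| ≤ β)
    (hrc : |gtil ((a+3*b)/4) - gtil ((a+b)/2)| ≤ β) :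
    (∀ x ∈ Set.Icc a b,
      min (min (gtil ((3*a+b)/4)) (gtil ((a+b)/2))) (gtil ((a+3*b)/4)) - 3*β ≤ gtil x) ∧
    min (min (gtil ((3*a+b)/4)) (gtil ((a+b)/2))) (gtil ((a+3*b)/4))
      ≤ sInf (gtil '' Set.Icc a b) + 3*β :=
  three_point_flatness_implies_near_optimality_general a b hab β hβ htil gtil hconv hsand hlc hrc
end

section
/- Let K ⊆ ℝⁿ be a convex set, β ≥ 0, and let g : K → [0,∞) be β-log-concave. For t > 0 define Y(t) = ∫_K g(x)^t dx. Then for all a, b > 0 with Y(a) < ∞ and Y(b) < ∞, ( (a+b)/2 )^{2n} · Y( (a+b)/2 )² ≥ e^{−β(a+b)} · aⁿ bⁿ · Y(a) Y(b). -/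
/-!
The proof goes through the Prékopa–Leindler inequality in its midpoint form
`∫f · ∫g ≤ (∫h)²` whenever `f x · g y ≤ h((x + y)/2)²`.

On `ℝ`, for bounded `f` and `g` (the general case follows by truncation), it comes from the
one-dimensional Brunn–Minkowski inequality applied to level sets, after rescaling `f` and `g` so
that their suprema agree; the layer-cake formula then integrates the level-set inequalities.
Fubini tensorises it to `ℝⁿ`.

For the theorem, apply it to `f = e^{-β(a+b)} g^a` dilated by `a`, `g^b` dilated by `b` and
`g^{(a+b)/2}` dilated by `(a+b)/2`: the midpoint of `a p` and `b q`, divided by `(a+b)/2`, is the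
convex combination `(a p + b q)/(a+b)`, where raising the β-log-concavity inequality to the power
`a + b` gives exactly the required bound. The dilations produce the factors `aⁿ`, `bⁿ` and
`((a+b)/2)ⁿ`.
-/

open MeasureTheory Set ENNReal

theorem volume_preimage_two_mul_sub (s : Set ℝ) (c : ℝ) :
    volume ((fun z => 2 * z - c) ⁻¹' s) = 2⁻¹ * volume s := by
  have : (fun z : ℝ => 2 * z - c) = (fun z => z - c) ∘ (fun z => 2 * z) := rfl
  rw [this, preimage_comp, Real.volume_preimage_mul_left two_ne_zero]
  simp [sub_eq_add_neg, measure_preimage_add_right]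

theorem volume_add_volume_le_two_mul_of_isCompact {A B C : Set ℝ} (hA : IsCompact A)
    (hB : IsCompact B) (hA₀ : A.Nonempty) (hB₀ : B.Nonempty)
    (hC : ∀ x ∈ A, ∀ y ∈ B, (x + y) / 2 ∈ C) :
    volume A + volume B ≤ 2 * volume C := by
  set a := sSup A
  set b := sInf B
  set SA := (fun z => 2 * z - b) ⁻¹' A
  set SB := (fun z => 2 * z - a) ⁻¹' B
  have hSA : SA ⊆ C ∩ Iic ((a + b) / 2) := fun z hz =>
    ⟨by simpa using hC _ hz b (hB.sInf_mem hB₀), by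
      have := le_csSup hA.bddAbove hz; simp only [mem_Iic]; linarith⟩
  have hSB : SB ⊆ C ∩ Ici ((a + b) / 2) := fun z hz =>
    ⟨by simpa using hC a (hA.sSup_mem hA₀) _ hz, by
      have := csInf_le hB.bddBelow hz; simp only [mem_Ici]; linarith⟩
  have hdisj : AEDisjoint volume SA SB :=
    measure_mono_null (fun z hz => le_antisymm (hSA hz.1).2 (hSB hz.2).2)
      (measure_singleton ((a + b) / 2))
  have hSBm : NullMeasurableSet SB volume :=
    (hB.measurableSet.preimage (by fun_prop)).nullMeasurableSet
  calc volume A + volume B = 2 * (volume SA + volume SB) := by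
        rw [volume_preimage_two_mul_sub, volume_preimage_two_mul_sub, ← mul_add, ← mul_assoc,
          ENNReal.mul_inv_cancel two_ne_zero ofNat_ne_top, one_mul]
    _ = 2 * volume (SA ∪ SB) := by rw [measure_union₀ hSBm hdisj]
    _ ≤ 2 * volume C := by
        gcongr
        exact union_subset (hSA.trans inter_subset_left) (hSB.trans inter_subset_left)

theorem volume_add_volume_le_two_mul {A B C : Set ℝ} (hA : MeasurableSet A)
    (hB : MeasurableSet B) (hA₀ : A.Nonempty) (hB₀ : B.Nonempty)
    (hC : ∀ x ∈ A, ∀ y ∈ B, (x + y) / 2 ∈ C) :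
    volume A + volume B ≤ 2 * volume C := by
  obtain ⟨x₀, hx₀⟩ := hA₀
  obtain ⟨y₀, hy₀⟩ := hB₀
  simp only [hA.measure_eq_iSup_isCompact, hB.measure_eq_iSup_isCompact, iSup_and']
  refine ENNReal.biSup_add_biSup_le' ⟨∅, empty_subset _, isCompact_empty⟩
    ⟨∅, empty_subset _, isCompact_empty⟩ fun K ⟨hKA, hK⟩ L ⟨hLB, hL⟩ => ?_
  calc volume K + volume L ≤ volume (insert x₀ K) + volume (insert y₀ L) := by
        gcongr <;> exact subset_insert _ _
    _ ≤ 2 * volume C :=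
        volume_add_volume_le_two_mul_of_isCompact (hK.insert x₀) (hL.insert y₀)
          (insert_nonempty _ _) (insert_nonempty _ _) fun x hx y hy =>
          hC x (insert_subset hx₀ hKA hx) y (insert_subset hy₀ hLB hy)

theorem lintegral_add_lintegral_le_two_mul_of_min_le {f g h : ℝ → ℝ}
    (hfm : Measurable f) (hgm : Measurable g) (hhm : Measurable h) (hf : 0 ≤ f) (hg : 0 ≤ g)
    (hfg : ∀ t, (∃ x, t < f x) ↔ ∃ y, t < g y)
    (hmin : ∀ x y, min (f x) (g y) ≤ h ((x + y) / 2)) :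
    (∫⁻ x, ENNReal.ofReal (f x)) + ∫⁻ x, ENNReal.ofReal (g x) ≤
      2 * ∫⁻ x, ENNReal.ofReal (h x) := by
  have hh : 0 ≤ h := fun z => by simpa using (le_min (hf z) (hg z)).trans (hmin z z)
  have hlevel : ∀ t,
      volume {x | t < f x} + volume {y | t < g y} ≤ 2 * volume {z | t < h z} := by
    intro t
    by_cases hne : ∃ x, t < f x
    · exact volume_add_volume_le_two_mul (measurableSet_lt measurable_const hfm)
        (measurableSet_lt measurable_const hgm) hne ((hfg t).1 hne)
        fun x hx y hy => lt_of_lt_of_le (lt_min hx hy) (hmin x y)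
    · have hA : {x | t < f x} = ∅ := eq_empty_iff_forall_notMem.2 fun x hx => hne ⟨x, hx⟩
      have hB : {y | t < g y} = ∅ :=
        eq_empty_iff_forall_notMem.2 fun y hy => (hfg t).not.1 hne ⟨y, hy⟩
      simp [hA, hB]
  rw [lintegral_eq_lintegral_meas_lt volume (ae_of_all _ hf) hfm.aemeasurable,
    lintegral_eq_lintegral_meas_lt volume (ae_of_all _ hg) hgm.aemeasurable,
    lintegral_eq_lintegral_meas_lt volume (ae_of_all _ hh) hhm.aemeasurable]
  calc _ ≤ ∫⁻ t in Ioi 0, volume {x | t < f x} + volume {y | t < g y} := le_lintegral_add _ _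
    _ ≤ ∫⁻ t in Ioi 0, 2 * volume {z | t < h z} := lintegral_mono fun t => hlevel t
    _ = _ := lintegral_const_mul' _ _ ofNat_ne_top

theorem ENNReal.four_mul_le_sq_add (a b : ℝ≥0∞) : 4 * a * b ≤ (a + b) ^ 2 := by
  induction a using ENNReal.recTopCoe with
  | top => rcases eq_or_ne b 0 with rfl | hb <;> simp [*]
  | coe a =>
    induction b using ENNReal.recTopCoe with
    | top => rcases eq_or_ne a 0 with rfl | ha <;> simp [*]
    | coe b => exact_mod_cast _root_.four_mul_le_sq_add a b

theorem ENNReal.mul_le_sq_of_add_le_two_mul {a b c : ℝ≥0∞} (h : a + b ≤ 2 * c) :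
    a * b ≤ c ^ 2 := by
  rw [← ENNReal.mul_le_mul_iff_right four_ne_zero ofNat_ne_top, ← mul_assoc]
  calc 4 * a * b ≤ (a + b) ^ 2 := ENNReal.four_mul_le_sq_add a b
    _ ≤ (2 * c) ^ 2 := by gcongr
    _ = 4 * c ^ 2 := by ring

theorem min_le_of_mul_le_sq_of_nonneg {a b c : ℝ} (ha : 0 ≤ a) (hb : 0 ≤ b) (hc : 0 ≤ c)
    (h : a * b ≤ c ^ 2) : min a b ≤ c :=
  le_of_sq_le_sq ((sq (min a b)).trans_le <|
    (mul_le_mul (min_le_left a b) (min_le_right a b) (le_min ha hb) ha).trans h) hc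

theorem exists_lt_mul_iff_lt_mul_ciSup {ι : Type*} [Nonempty ι] {φ : ι → ℝ}
    (hφ : BddAbove (range φ)) {c : ℝ}
    (hc : 0 < c) (t : ℝ) : (∃ x, t < c * φ x) ↔ t < c * ⨆ x, φ x := by
  simp only [← div_lt_iff₀' hc, lt_ciSup_iff hφ]

theorem lintegral_mul_lintegral_le_sq_of_bddAbove {f g h : ℝ → ℝ}
    (hfm : Measurable f) (hgm : Measurable g) (hhm : Measurable h)
    (hf : 0 ≤ f) (hg : 0 ≤ g) (hh : 0 ≤ h)
    (hfb : BddAbove (range f)) (hgb : BddAbove (range g))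
    (hfgh : ∀ x y, f x * g y ≤ h ((x + y) / 2) ^ 2) :
    (∫⁻ x, ENNReal.ofReal (f x)) * (∫⁻ x, ENNReal.ofReal (g x)) ≤
      (∫⁻ x, ENNReal.ofReal (h x)) ^ 2 := by
  set F := ⨆ x, f x
  set G := ⨆ y, g y
  rcases (Real.iSup_nonneg hf).eq_or_lt with hF | hF
  · have : ∀ x, f x = 0 := fun x => le_antisymm (hF ▸ le_ciSup hfb x) (hf x)
    simp [this]
  rcases (Real.iSup_nonneg hg).eq_or_lt with hG | hG
  · have : ∀ y, g y = 0 := fun y => le_antisymm (hG ▸ le_ciSup hgb y) (hg y)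
    simp [this]
  -- `k f` and `k⁻¹ g` have the same supremum, so their level sets are nonempty for the same `t`.
  set k := √(G / F)
  have hk : 0 < k := Real.sqrt_pos.2 (div_pos hG hF)
  have hk' : 0 < k⁻¹ := inv_pos.2 hk
  have hkF : k * F = k⁻¹ * G := by
    rw [eq_inv_mul_iff_mul_eq₀ hk.ne', ← mul_assoc, Real.mul_self_sqrt (div_pos hG hF).le,
      div_mul_cancel₀ _ hF.ne']
  have hadd := lintegral_add_lintegral_le_two_mul_of_min_le (f := fun x => k * f x)
    (g := fun y => k⁻¹ * g y) (measurable_const.mul hfm) (measurable_const.mul hgm) hhm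
    (fun x => mul_nonneg hk.le (hf x)) (fun y => mul_nonneg hk'.le (hg y))
    (fun t => by
      rw [exists_lt_mul_iff_lt_mul_ciSup hfb hk, exists_lt_mul_iff_lt_mul_ciSup hgb hk', hkF])
    fun x y => min_le_of_mul_le_sq_of_nonneg (mul_nonneg hk.le (hf x)) (mul_nonneg hk'.le (hg y)) (hh _)
      (by rw [mul_mul_mul_comm, mul_inv_cancel₀ hk.ne', one_mul]; exact hfgh x y)
  simp only [ENNReal.ofReal_mul hk.le, ENNReal.ofReal_mul hk'.le,
    lintegral_const_mul' _ _ ofReal_ne_top] at hadd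
  calc (∫⁻ x, ENNReal.ofReal (f x)) * (∫⁻ x, ENNReal.ofReal (g x))
      = (ENNReal.ofReal k * ∫⁻ x, ENNReal.ofReal (f x)) *
          (ENNReal.ofReal k⁻¹ * ∫⁻ x, ENNReal.ofReal (g x)) := by
        rw [mul_mul_mul_comm, ← ENNReal.ofReal_mul hk.le, mul_inv_cancel₀ hk.ne',
          ENNReal.ofReal_one, one_mul]
    _ ≤ _ := ENNReal.mul_le_sq_of_add_le_two_mul hadd

def MidpointPrekopaLeindler {E : Type*} [MeasurableSpace E] [AddCommGroup E] [Module ℝ E]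
    (μ : Measure E) : Prop :=
  ∀ f g h : E → ℝ≥0∞, Measurable f → Measurable g → Measurable h →
    (∀ x y, f x * g y ≤ h ((2 : ℝ)⁻¹ • (x + y)) ^ 2) →
    (∫⁻ x, f x ∂μ) * (∫⁻ x, g x ∂μ) ≤ (∫⁻ x, h x ∂μ) ^ 2

theorem lintegral_eq_iSup_lintegral_min_natCast {α : Type*} [MeasurableSpace α]
    {μ : Measure α} {f : α → ℝ≥0∞} (hf : Measurable f) :
    ∫⁻ x, f x ∂μ = ⨆ n : ℕ, ∫⁻ x, min (f x) n ∂μ := by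
  rw [← lintegral_iSup (fun n => hf.min measurable_const)
    fun m n hmn x => min_le_min_left _ (Nat.cast_le.2 hmn)]
  simp only [← inf_iSup_eq, ENNReal.iSup_natCast, inf_top_eq]

theorem min_mul_min_le_min_sq {a b c : ℝ≥0∞} (h : a * b ≤ c ^ 2) (n : ℝ≥0∞) :
    min a n * min b n ≤ min c n ^ 2 := by
  rcases le_total c n with hc | hc
  · rw [min_eq_left hc]
    exact (mul_le_mul' (min_le_left _ _) (min_le_left _ _)).trans h
  · rw [min_eq_right hc, sq]
    exact mul_le_mul' (min_le_right _ _) (min_le_right _ _)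

theorem midpointPrekopaLeindler_volume_real : MidpointPrekopaLeindler (volume : Measure ℝ) := by
  intro f g h hf hg hh hfgh
  have htrunc : ∀ (φ : ℝ → ℝ≥0∞) (n : ℕ) x,
      ENNReal.ofReal (min (φ x) n).toReal = min (φ x) n :=
    fun φ n x => ofReal_toReal (min_lt_of_right_lt (natCast_lt_top n)).ne
  have hbdd : ∀ (φ : ℝ → ℝ≥0∞) (n : ℕ), BddAbove (range fun x => (min (φ x) n).toReal) :=
    fun φ n => ⟨n, by
      rintro _ ⟨x, rfl⟩
      exact (toReal_mono (natCast_ne_top n) (min_le_right _ _)).trans_eq (toReal_natCast n)⟩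
  have hn : ∀ n : ℕ, (∫⁻ x, min (f x) n) * (∫⁻ x, min (g x) n) ≤ (∫⁻ x, h x) ^ 2 := by
    intro n
    have := lintegral_mul_lintegral_le_sq_of_bddAbove (f := fun x => (min (f x) n).toReal)
      (g := fun x => (min (g x) n).toReal) (h := fun x => (min (h x) n).toReal)
      (hf.min measurable_const).ennreal_toReal (hg.min measurable_const).ennreal_toReal
      (hh.min measurable_const).ennreal_toReal (fun _ => toReal_nonneg) (fun _ => toReal_nonneg)
      (fun _ => toReal_nonneg) (hbdd f n) (hbdd g n) fun x y => by
        rw [← toReal_mul, ← toReal_pow, ← inv_mul_eq_div, ← smul_eq_mul]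
        exact toReal_mono (pow_ne_top (min_lt_of_right_lt (natCast_lt_top n)).ne)
          (min_mul_min_le_min_sq (hfgh x y) n)
    simp only [htrunc] at this
    exact this.trans (pow_le_pow_left' (lintegral_mono fun x => min_le_left _ _) 2)
  rw [lintegral_eq_iSup_lintegral_min_natCast hf, lintegral_eq_iSup_lintegral_min_natCast hg,
    ENNReal.iSup_mul]
  refine iSup_le fun m => ?_
  rw [ENNReal.mul_iSup]
  refine iSup_le fun n => (mul_le_mul' ?_ ?_).trans (hn (max m n))
  all_goals exact lintegral_mono fun x => min_le_min_left _ (by exact_mod_cast (by omega))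

namespace MidpointPrekopaLeindler

variable {E F : Type*} [MeasurableSpace E] [AddCommGroup E] [Module ℝ E]
  [MeasurableSpace F] [AddCommGroup F] [Module ℝ F]

theorem of_subsingleton [Subsingleton E] (μ : Measure E) : MidpointPrekopaLeindler μ := by
  intro f g h _ _ _ hfgh
  rcases isEmpty_or_nonempty E with hE | ⟨⟨x⟩⟩
  · simp
  have hconst : ∀ φ : E → ℝ≥0∞, ∫⁻ y, φ y ∂μ = φ x * μ univ := fun φ => by
    rw [← lintegral_const, lintegral_congr fun y => congrArg φ (Subsingleton.elim y x)]
  simp only [hconst, mul_pow, mul_mul_mul_comm, ← sq]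
  gcongr
  simpa only [Subsingleton.elim ((2 : ℝ)⁻¹ • (x + x)) x] using hfgh x x

theorem of_measurePreserving {μ : Measure E} {ν : Measure F} (hμ : MidpointPrekopaLeindler μ)
    {T : E → F} (hT : MeasurePreserving T μ ν)
    (hT₂ : ∀ x y, T ((2 : ℝ)⁻¹ • (x + y)) = (2 : ℝ)⁻¹ • (T x + T y)) :
    MidpointPrekopaLeindler ν := by
  intro f g h hf hg hh hfgh
  rw [← hT.lintegral_comp hf, ← hT.lintegral_comp hg, ← hT.lintegral_comp hh]
  exact hμ _ _ _ (hf.comp hT.measurable) (hg.comp hT.measurable) (hh.comp hT.measurable)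
    fun x y => by simpa only [hT₂] using hfgh (T x) (T y)

theorem prod {μ : Measure E} {ν : Measure F} [SFinite ν] (hμ : MidpointPrekopaLeindler μ)
    (hν : MidpointPrekopaLeindler ν) : MidpointPrekopaLeindler (μ.prod ν) := by
  intro f g h hf hg hh hfgh
  rw [lintegral_prod _ hf.aemeasurable, lintegral_prod _ hg.aemeasurable,
    lintegral_prod _ hh.aemeasurable]
  refine hμ _ _ _ hf.lintegral_prod_right' hg.lintegral_prod_right' hh.lintegral_prod_right'
    fun x x' => hν _ _ _ (hf.comp measurable_prodMk_left) (hg.comp measurable_prodMk_left)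
      (hh.comp measurable_prodMk_left) fun y y' => ?_
  simpa using hfgh (x, y) (x', y')

end MidpointPrekopaLeindler

theorem midpointPrekopaLeindler_volume_pi (n : ℕ) :
    MidpointPrekopaLeindler (volume : Measure (Fin n → ℝ)) := by
  induction n with
  | zero => exact .of_subsingleton _
  | succ n ih =>
    refine (midpointPrekopaLeindler_volume_real.prod ih).of_measurePreserving
      (volume_preserving_piFinSuccAbove (fun _ => ℝ) 0).symm fun p q => ?_
    ext j
    refine Fin.cases ?_ (fun i => ?_) j <;> simp [mul_add]

theorem midpointPrekopaLeindler_volume_euclideanSpace (n : ℕ) :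
    MidpointPrekopaLeindler (volume : Measure (EuclideanSpace ℝ (Fin n))) :=
  (midpointPrekopaLeindler_volume_pi n).of_measurePreserving
    (EuclideanSpace.volume_preserving_symm_measurableEquiv_toLp (Fin n)).symm fun _ _ => rfl

section Dilation

variable {E : Type*} [NormedAddCommGroup E] [NormedSpace ℝ E] [MeasurableSpace E] [BorelSpace E]
  [FiniteDimensional ℝ E] (μ : Measure E) [μ.IsAddHaarMeasure]

theorem lintegral_comp_inv_smul_of_pos (f : E → ℝ≥0∞) {r : ℝ} (hr : 0 < r) :
    ∫⁻ x, f (r⁻¹ • x) ∂μ = ENNReal.ofReal (r ^ Module.finrank ℝ E) * ∫⁻ x, f x ∂μ := by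
  have := lintegral_map_equiv (μ := μ) f
    (Homeomorph.smulOfNeZero r⁻¹ (inv_ne_zero hr.ne')).toMeasurableEquiv
  simp only [Homeomorph.toMeasurableEquiv_coe, Homeomorph.smulOfNeZero_apply] at this
  rw [← this, Measure.map_addHaar_smul μ (inv_ne_zero hr.ne'), lintegral_smul_measure]
  simp [abs_of_pos hr]

variable {μ}

theorem MidpointPrekopaLeindler.lintegral_mul_lintegral_le_of_smul_add_smul
    (hμ : MidpointPrekopaLeindler μ) {a b : ℝ} (ha : 0 < a) (hb : 0 < b)
    {f g h : E → ℝ≥0∞} (hf : Measurable f) (hg : Measurable g) (hh : Measurable h)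
    (hfgh : ∀ p q, f p * g q ≤ h ((a + b)⁻¹ • (a • p + b • q)) ^ 2) :
    (ENNReal.ofReal (a ^ Module.finrank ℝ E) * ∫⁻ x, f x ∂μ) *
        (ENNReal.ofReal (b ^ Module.finrank ℝ E) * ∫⁻ x, g x ∂μ) ≤
      (ENNReal.ofReal (((a + b) / 2) ^ Module.finrank ℝ E) * ∫⁻ x, h x ∂μ) ^ 2 := by
  rw [← lintegral_comp_inv_smul_of_pos μ f ha, ← lintegral_comp_inv_smul_of_pos μ g hb,
    ← lintegral_comp_inv_smul_of_pos μ h (by positivity)]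
  refine hμ _ _ _ (hf.comp (measurable_const_smul _)) (hg.comp (measurable_const_smul _))
    (hh.comp (measurable_const_smul _)) fun x y => ?_
  have hmid : ((a + b) / 2)⁻¹ • (2 : ℝ)⁻¹ • (x + y) =
      (a + b)⁻¹ • (a • a⁻¹ • x + b • b⁻¹ • y) := by
    rw [smul_inv_smul₀ ha.ne', smul_inv_smul₀ hb.ne', smul_smul, ← mul_inv,
      div_mul_cancel₀ _ two_ne_zero]
  simpa only [hmid] using hfgh (a⁻¹ • x) (b⁻¹ • y)

end Dilation

section LogConcave

variable {E : Type*} [AddCommGroup E] [Module ℝ E]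

theorem inv_add_smul_add_smul_eq {a b : ℝ} (hab : a + b ≠ 0) (p q : E) :
    (a + b)⁻¹ • (a • p + b • q) = (a / (a + b)) • p + (1 - a / (a + b)) • q := by
  rw [one_sub_div hab, add_sub_cancel_left, smul_add, smul_smul, smul_smul, inv_mul_eq_div,
    inv_mul_eq_div]

theorem Convex.inv_add_smul_add_smul_mem {S : Set E} (hS : Convex ℝ S) {p q : E} (hp : p ∈ S)
    (hq : q ∈ S) {a b : ℝ} (ha : 0 < a) (hb : 0 < b) : (a + b)⁻¹ • (a • p + b • q) ∈ S := by
  rw [inv_add_smul_add_smul_eq (by positivity)]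
  exact hS hp hq (by positivity) (sub_nonneg.2 (div_le_one_of_le₀ (by linarith) (by positivity)))
    (add_sub_cancel _ _)

theorem exp_neg_mul_mul_rpow_mul_rpow_le {K : Set E} {β : ℝ} {g : E → ℝ}
    (hg0 : ∀ x ∈ K, 0 ≤ g x)
    (hgβ : ∀ x ∈ K, ∀ y ∈ K, ∀ α : ℝ, α ∈ Icc (0:ℝ) 1 →
      Real.exp (-β) * (g x ^ α * g y ^ (1 - α)) ≤ g (α • x + (1 - α) • y))
    {p q : E} (hp : p ∈ K) (hq : q ∈ K) {a b : ℝ} (ha : 0 < a) (hb : 0 < b) :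
    Real.exp (-β * (a + b)) * (g p ^ a * g q ^ b) ≤
      g ((a + b)⁻¹ • (a • p + b • q)) ^ (a + b) := by
  have hab : 0 < a + b := add_pos ha hb
  set α := a / (a + b)
  have hα : α * (a + b) = a := div_mul_cancel₀ _ hab.ne'
  have hα' : (1 - α) * (a + b) = b := by rw [sub_mul, hα, one_mul, add_sub_cancel_left]
  have hαI : α ∈ Icc (0 : ℝ) 1 := ⟨by positivity, div_le_one_of_le₀ (by linarith) hab.le⟩
  have hgp := hg0 p hp
  have hgq := hg0 q hq
  rw [inv_add_smul_add_smul_eq hab.ne']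
  calc Real.exp (-β * (a + b)) * (g p ^ a * g q ^ b)
      = (Real.exp (-β) * (g p ^ α * g q ^ (1 - α))) ^ (a + b) := by
        rw [Real.mul_rpow (Real.exp_nonneg _) (by positivity), ← Real.exp_mul,
          Real.mul_rpow (by positivity) (by positivity), ← Real.rpow_mul hgp,
          ← Real.rpow_mul hgq, hα, hα']
    _ ≤ _ := Real.rpow_le_rpow (by positivity) (hgβ p hp q hq α hαI) hab.le

end LogConcave

theorem lintegral_rpow_mul_lintegral_rpow_le {n : ℕ} {S : Set (EuclideanSpace ℝ (Fin n))}
    (hS : Convex ℝ S) (hSm : MeasurableSet S) {β : ℝ} {g : EuclideanSpace ℝ (Fin n) → ℝ}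
    (hgm : Measurable g) (hg0 : ∀ x ∈ S, 0 ≤ g x)
    (hgβ : ∀ x ∈ S, ∀ y ∈ S, ∀ α : ℝ, α ∈ Icc (0:ℝ) 1 →
      Real.exp (-β) * (g x ^ α * g y ^ (1 - α)) ≤ g (α • x + (1 - α) • y))
    {a b : ℝ} (ha : 0 < a) (hb : 0 < b) :
    ENNReal.ofReal (Real.exp (-β * (a + b)) * (a ^ n * b ^ n)) *
        ((∫⁻ x in S, ENNReal.ofReal (g x ^ a)) * ∫⁻ x in S, ENNReal.ofReal (g x ^ b)) ≤
      ENNReal.ofReal (((a + b) / 2) ^ (2 * n)) *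
        (∫⁻ x in S, ENNReal.ofReal (g x ^ ((a + b) / 2))) ^ 2 := by
  have hgm' : ∀ t : ℝ, Measurable fun x => g x ^ t := fun t => hgm.pow_const t
  have key := (midpointPrekopaLeindler_volume_euclideanSpace n)
    |>.lintegral_mul_lintegral_le_of_smul_add_smul ha hb
    (f := S.indicator fun x => ENNReal.ofReal (Real.exp (-β * (a + b)) * g x ^ a))
    (g := S.indicator fun x => ENNReal.ofReal (g x ^ b))
    (h := S.indicator fun x => ENNReal.ofReal (g x ^ ((a + b) / 2)))
    ((measurable_const.mul (hgm' a)).ennreal_ofReal.indicator hSm)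
    ((hgm' b).ennreal_ofReal.indicator hSm) ((hgm' _).ennreal_ofReal.indicator hSm)
    fun p q => by
      by_cases hp : p ∈ S
      swap; · simp [hp]
      by_cases hq : q ∈ S
      swap; · simp [hq]
      have hm := hS.inv_add_smul_add_smul_mem hp hq ha hb
      rw [indicator_of_mem hp, indicator_of_mem hq, indicator_of_mem hm,
        ← ENNReal.ofReal_mul (by have := hg0 p hp; positivity),
        ← ENNReal.ofReal_pow (by have := hg0 _ hm; positivity), ← Real.rpow_natCast,
        ← Real.rpow_mul (hg0 _ hm), mul_assoc]
      refine ENNReal.ofReal_le_ofReal ?_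
      convert exp_neg_mul_mul_rpow_mul_rpow_le hg0 hgβ hp hq ha hb using 2
      push_cast; ring
  simp only [finrank_euclideanSpace_fin, lintegral_indicator hSm,
    ENNReal.ofReal_mul (Real.exp_nonneg _), lintegral_const_mul' _ _ ofReal_ne_top] at key
  rw [pow_mul', ENNReal.ofReal_pow (by positivity), ENNReal.ofReal_mul (Real.exp_nonneg _),
    ENNReal.ofReal_mul (by positivity : (0 : ℝ) ≤ a ^ n)]
  convert key using 1 <;> ring

theorem Real.rpow_add_div_two_le {x : ℝ} (hx : 0 ≤ x) {a b : ℝ} (hab : a + b ≠ 0) :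
    x ^ ((a + b) / 2) ≤ (x ^ a + x ^ b) / 2 := by
  have := Real.geom_mean_le_arith_mean2_weighted (w₁ := 1 / 2) (w₂ := 1 / 2)
    (by norm_num) (by norm_num) (Real.rpow_nonneg hx a) (Real.rpow_nonneg hx b) (by norm_num)
  rw [← Real.rpow_mul hx, ← Real.rpow_mul hx, ← Real.rpow_add' hx (by contrapose! hab; linarith)]
    at this
  convert this using 2 <;> ring

theorem IntegrableOn.rpow_add_div_two {α : Type*} [MeasurableSpace α] {μ : Measure α}
    {s : Set α} (hs : NullMeasurableSet s μ) {g : α → ℝ} (hgm : Measurable g)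
    (hg0 : ∀ x ∈ s, 0 ≤ g x) {a b : ℝ} (hab : a + b ≠ 0)
    (ha : IntegrableOn (fun x => g x ^ a) s μ) (hb : IntegrableOn (fun x => g x ^ b) s μ) :
    IntegrableOn (fun x => g x ^ ((a + b) / 2)) s μ := by
  refine ((ha.add hb).div_const 2).mono' (hgm.pow_const _).aestronglyMeasurable ?_
  filter_upwards [ae_restrict_mem₀ hs] with x hx
  rw [Real.norm_of_nonneg (Real.rpow_nonneg (hg0 x hx) _)]
  exact Real.rpow_add_div_two_le (hg0 x hx) hab

theorem beta_logconcave_partition_function_inequality_general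
    {n : ℕ} (K : Set (EuclideanSpace ℝ (Fin n))) (hK : Convex ℝ K)
    (β : ℝ)
    (g : EuclideanSpace ℝ (Fin n) → ℝ) (hgm : Measurable g)
    (hg0 : ∀ x ∈ K, 0 ≤ g x)
    (hgβ : ∀ x ∈ K, ∀ y ∈ K, ∀ α : ℝ, α ∈ Set.Icc (0:ℝ) 1 →
      Real.exp (-β) * (g x ^ α * g y ^ (1 - α)) ≤ g (α • x + (1 - α) • y))
    (a b : ℝ) (ha : 0 < a) (hb : 0 < b)
    (hYa : IntegrableOn (fun x => g x ^ a) K)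
    (hYb : IntegrableOn (fun x => g x ^ b) K) :
    Real.exp (-β * (a + b)) * (a ^ n * b ^ n) *
        ((∫ x in K, g x ^ a) * (∫ x in K, g x ^ b))
      ≤ ((a + b) / 2) ^ (2 * n) * (∫ x in K, g x ^ ((a + b) / 2)) ^ 2 := by
  have hKm := hK.nullMeasurableSet volume
  have hint : ∀ t : ℝ, ∫ x in K, g x ^ t = (∫⁻ x in K, ENNReal.ofReal (g x ^ t)).toReal :=
    fun t => integral_eq_lintegral_of_nonneg_ae
      ((ae_restrict_mem₀ hKm).mono fun x hx => Real.rpow_nonneg (hg0 x hx) t)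
      (hgm.pow_const t).aestronglyMeasurable
  have hYc := IntegrableOn.rpow_add_div_two hKm hgm hg0 (by positivity) hYa hYb
  -- `K` need not be measurable, but its interior is, and differs from `K` by the null frontier.
  have key := lintegral_rpow_mul_lintegral_rpow_le hK.interior isOpen_interior.measurableSet hgm
    (fun x hx => hg0 x (interior_subset hx))
    (fun x hx y hy => hgβ x (interior_subset hx) y (interior_subset hy)) ha hb
  rw [Measure.restrict_congr_set (interior_ae_eq_of_null_frontier (hK.addHaar_frontier volume))]
    at key
  have := ENNReal.toReal_mono (mul_ne_top ofReal_ne_top (pow_ne_top hYc.lintegral_lt_top.ne)) key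
  rwa [toReal_mul, toReal_mul, toReal_mul, toReal_pow, toReal_ofReal (by positivity),
    toReal_ofReal (by positivity), ← hint, ← hint, ← hint] at this

/-- For a `β`-log-concave `g : K → [0,∞)` on a convex `K ⊆ ℝⁿ` and
`Y(t) = ∫_K g(x)^t dx`, for all `a, b > 0` with `Y(a), Y(b) < ∞`:
`((a+b)/2)^{2n} Y((a+b)/2)² ≥ e^{−β(a+b)} aⁿ bⁿ Y(a) Y(b)`. -/
theorem beta_logconcave_partition_function_inequality
    {n : ℕ} (K : Set (EuclideanSpace ℝ (Fin n))) (hK : Convex ℝ K)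
    (β : ℝ) (hβ : 0 ≤ β)
    (g : EuclideanSpace ℝ (Fin n) → ℝ) (hgm : Measurable g)
    (hg0 : ∀ x ∈ K, 0 ≤ g x)
    (hgβ : ∀ x ∈ K, ∀ y ∈ K, ∀ α : ℝ, α ∈ Set.Icc (0:ℝ) 1 →
      Real.exp (-β) * (g x ^ α * g y ^ (1 - α)) ≤ g (α • x + (1 - α) • y))
    (a b : ℝ) (ha : 0 < a) (hb : 0 < b)
    (hYa : IntegrableOn (fun x => g x ^ a) K)
    (hYb : IntegrableOn (fun x => g x ^ b) K) :
    Real.exp (-β * (a + b)) * (a ^ n * b ^ n) *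
        ((∫ x in K, g x ^ a) * (∫ x in K, g x ^ b))
      ≤ ((a + b) / 2) ^ (2 * n) * (∫ x in K, g x ^ ((a + b) / 2)) ^ 2 :=
  beta_logconcave_partition_function_inequality_general K hK β g hgm hg0 hgβ a b ha hb hYa hYb
end

section
/- Let K ⊂ ℝⁿ be a compact convex set with nonempty interior, let f : K → ℝ be a continuous convex function, and let T > 0. If X is a random point in K with density proportional to exp(−f(x)/T), then E[f(X)] − min_{x∈K} f(x) ≤ (n+1) T. -/
/-!
Contracting `K` towards a point `z ∈ K` by the homothety of ratio `b ∈ (0, 1)` keeps it inside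
`K`, and convexity gives `f (z + b (y - z)) ≤ (1 - b) f z + b f y`. Changing variables, the
partition function `Z = ∫_K e^{-f/T}` is at least `b^d ∫_K e^{-((1 - b) f z + b f) / T}`, and the
tangent-line bound `e^u ≥ 1 + u` bounds this from below by `Z + (1 - b)/T ∫_K (f - f z) e^{-f/T}`.
So the Gibbs mean of `f - f z` is at most `T (b⁻ᵈ - 1) / (1 - b)`, which tends to `d T` as `b → 1`;
the fixed ratio `b = 1 - 1/(d + 2)²` already gives `(d + 1) T`. As `z ∈ K` is arbitrary, this
bounds the mean of `f` minus its infimum over `K`.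
-/

open MeasureTheory Real Module

theorem AffineMap.homothety_eq_sub_smul_add_smul {E : Type*} [AddCommGroup E] [Module ℝ E]
    (z y : E) (b : ℝ) :
    AffineMap.homothety z b y = (z - b • z) + b • y := by
  rw [homothety_apply, vsub_eq_sub, vadd_eq_add, smul_sub]; abel

theorem Convex.mapsTo_homothety {E : Type*} [AddCommGroup E] [Module ℝ E] {K : Set E}
    (hK : Convex ℝ K) {z : E} (hz : z ∈ K) {b : ℝ} (hb0 : 0 ≤ b) (hb1 : b ≤ 1) :
    Set.MapsTo (AffineMap.homothety z b) K K := fun y hy => by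
  rw [AffineMap.homothety_eq_lineMap]
  exact hK.lineMap_mem hz hy ⟨hb0, hb1⟩

theorem exp_neg_mul_one_add_sub_le (u v : ℝ) : exp (-u) * (1 + (u - v)) ≤ exp (-v) :=
  calc exp (-u) * (1 + (u - v)) ≤ exp (-u) * exp (u - v) := by
        gcongr; linarith [add_one_le_exp (u - v)]
    _ = exp (-v) := by rw [← exp_add]; ring_nf

theorem inv_one_sub_pow_le {δ : ℝ} (d : ℕ) (hδ0 : 0 ≤ δ) (hδ1 : δ < 1)
    (hδ : d * (d + 1) * δ ≤ 1) : ((1 - δ) ^ d)⁻¹ ≤ 1 + (d + 1) * δ := by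
  have hbern : 1 - d * δ ≤ (1 - δ) ^ d := by
    have := one_add_mul_le_pow (a := -δ) (by linarith) d
    rw [← sub_eq_add_neg] at this
    linarith
  have hpos : 0 < (1 - δ) ^ d := pow_pos (by linarith) d
  rw [inv_le_iff_one_le_mul₀ hpos]
  nlinarith [mul_le_mul_of_nonneg_left hbern (by positivity : (0 : ℝ) ≤ 1 + (d + 1) * δ)]

theorem integral_inv_lintegral_smul_withDensity {α : Type*} [MeasurableSpace α] {μ : Measure α}
    {w : α → ℝ} (hw : Integrable w μ) (hw0 : 0 ≤ᵐ[μ] w) (g : α → ℝ) :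
    ∫ x, g x ∂((∫⁻ x, ENNReal.ofReal (w x) ∂μ)⁻¹ • μ.withDensity fun x => ENNReal.ofReal (w x))
      = (∫ x, w x * g x ∂μ) / ∫ x, w x ∂μ := by
  rw [integral_smul_measure, ← ofReal_integral_eq_lintegral_ofReal hw hw0, ENNReal.toReal_inv,
    ENNReal.toReal_ofReal (integral_nonneg_of_ae hw0),
    integral_withDensity_eq_integral_toReal_smul₀ hw.aemeasurable.ennreal_ofReal
      (Filter.Eventually.of_forall fun _ => ENNReal.ofReal_lt_top),
    smul_eq_mul, div_eq_inv_mul]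
  congr 1
  refine integral_congr_ae ?_
  filter_upwards [hw0] with x hx
  rw [ENNReal.toReal_ofReal hx, smul_eq_mul]

section AddHaar

variable {E F : Type*} [NormedAddCommGroup E] [NormedSpace ℝ E] [MeasurableSpace E] [BorelSpace E]
  [FiniteDimensional ℝ E] (μ : Measure E) [μ.IsAddHaarMeasure]
  [NormedAddCommGroup F]

theorem integral_comp_homothety [NormedSpace ℝ F] (h : E → F) (z : E) {b : ℝ} (hb : 0 ≤ b) :
    ∫ y, h (AffineMap.homothety z b y) ∂μ = (b ^ finrank ℝ E)⁻¹ • ∫ y, h y ∂μ := by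
  simp_rw [AffineMap.homothety_eq_sub_smul_add_smul]
  rw [Measure.integral_comp_smul_of_nonneg μ (fun w => h ((z - b • z) + w)) b (hR := hb),
    integral_add_left_eq_self]

theorem MeasureTheory.Integrable.comp_homothety {h : E → F} (hh : Integrable h μ) (z : E) {b : ℝ}
    (hb : b ≠ 0) : Integrable (fun y => h (AffineMap.homothety z b y)) μ := by
  simp_rw [AffineMap.homothety_eq_sub_smul_add_smul]
  exact (hh.comp_add_left (z - b • z)).comp_smul hb

theorem setIntegral_comp_homothety_le {K : Set E} (hKm : MeasurableSet K) (hK : Convex ℝ K)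
    {z : E} (hz : z ∈ K) {h : E → ℝ} (hh : IntegrableOn h K μ) (hh0 : ∀ x ∈ K, 0 ≤ h x)
    {b : ℝ} (hb0 : 0 < b) (hb1 : b ≤ 1) :
    ∫ y in K, h (AffineMap.homothety z b y) ∂μ ≤ (b ^ finrank ℝ E)⁻¹ * ∫ x in K, h x ∂μ := by
  have hind : Integrable (fun y => K.indicator h (AffineMap.homothety z b y)) μ :=
    (hh.integrable_indicator hKm).comp_homothety μ z hb0.ne'
  calc ∫ y in K, h (AffineMap.homothety z b y) ∂μ
      = ∫ y in K, K.indicator h (AffineMap.homothety z b y) ∂μ :=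
        setIntegral_congr_fun hKm fun y hy =>
          (Set.indicator_of_mem (hK.mapsTo_homothety hz hb0.le hb1 hy) h).symm
    _ ≤ ∫ y, K.indicator h (AffineMap.homothety z b y) ∂μ :=
        setIntegral_le_integral hind (Filter.Eventually.of_forall fun y =>
          Set.indicator_nonneg hh0 _)
    _ = (b ^ finrank ℝ E)⁻¹ * ∫ x in K, h x ∂μ := by
        rw [integral_comp_homothety μ _ z hb0.le, integral_indicator hKm, smul_eq_mul]

theorem setIntegral_exp_neg_div_mul_le {K : Set E} (hKc : IsCompact K) (hK : Convex ℝ K)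
    {f : E → ℝ} (hfc : ContinuousOn f K) (hf : ConvexOn ℝ K f) {z : E} (hz : z ∈ K)
    {T : ℝ} (hT : 0 < T) :
    ∫ x in K, exp (-f x / T) * f x ∂μ
      ≤ (f z + (finrank ℝ E + 1) * T) * ∫ x in K, exp (-f x / T) ∂μ := by
  have hKm : MeasurableSet K := hKc.measurableSet
  set d := finrank ℝ E
  set δ : ℝ := 1 / ((d : ℝ) + 2) ^ 2
  have hδ0 : 0 < δ := by positivity
  have hd : (0 : ℝ) ≤ d := d.cast_nonneg
  have hδ1 : δ < 1 := by rw [div_lt_one (by positivity)]; nlinarith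
  have hδd : d * (d + 1) * δ ≤ 1 := by rw [mul_one_div, div_le_one (by positivity)]; nlinarith
  set b := 1 - δ
  have hb0 : 0 < b := by simp [b, hδ1]
  have hb1 : b ≤ 1 := by simp [b, hδ0.le]
  set w : E → ℝ := fun x => exp (-f x / T)
  set Z := ∫ x in K, w x ∂μ
  set I := ∫ x in K, w x * f x ∂μ
  have hwc : ContinuousOn w K := continuous_exp.comp_continuousOn (hfc.neg.div_const T)
  have hwI : IntegrableOn w K μ := hwc.integrableOn_compact hKc
  have hwfI : IntegrableOn (fun x => w x * f x) K μ := (hwc.mul hfc).integrableOn_compact hKc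
  have hpt : ∀ y ∈ K, (1 - δ * f z / T) * w y + δ / T * (w y * f y)
      ≤ w (AffineMap.homothety z b y) := fun y hy => by
    have hconv : f (AffineMap.homothety z b y) ≤ (1 - b) * f z + b * f y := by
      simpa [AffineMap.homothety_eq_lineMap, AffineMap.lineMap_apply_module] using
        hf.2 hz hy (sub_nonneg.2 hb1) hb0.le (by ring)
    calc (1 - δ * f z / T) * w y + δ / T * (w y * f y)
        = exp (-(f y / T)) * (1 + (f y / T - ((1 - b) * f z + b * f y) / T)) := by
          simp only [w, b, neg_div]; ring
      _ ≤ exp (-(((1 - b) * f z + b * f y) / T)) := exp_neg_mul_one_add_sub_le _ _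
      _ ≤ w (AffineMap.homothety z b y) := by
          simp only [w, ← neg_div]; gcongr
  have hZ0 : 0 ≤ Z := setIntegral_nonneg hKm fun x _ => (exp_pos _).le
  have hsum : (1 - δ * f z / T) * Z + δ / T * I ≤ (b ^ d)⁻¹ * Z := calc
    (1 - δ * f z / T) * Z + δ / T * I
        = ∫ y in K, ((1 - δ * f z / T) * w y + δ / T * (w y * f y)) ∂μ := by
          rw [integral_add (hwI.const_mul _) (hwfI.const_mul _),
            integral_const_mul, integral_const_mul]
    _ ≤ ∫ y in K, w (AffineMap.homothety z b y) ∂μ := by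
          refine setIntegral_mono_on ((hwI.const_mul _).add (hwfI.const_mul _))
            ((hwc.comp (AffineMap.homothety_continuous z b).continuousOn
              (hK.mapsTo_homothety hz hb0.le hb1)).integrableOn_compact hKc)
            hKm hpt
    _ ≤ (b ^ d)⁻¹ * Z := setIntegral_comp_homothety_le μ hKm hK hz hwI
          (fun x _ => (exp_pos _).le) hb0 hb1
  have hpow : (b ^ d)⁻¹ ≤ 1 + (d + 1) * δ := inv_one_sub_pow_le d hδ0.le hδ1 hδd
  refine le_of_mul_le_mul_left ?_ (div_pos hδ0 hT)
  calc δ / T * I ≤ ((b ^ d)⁻¹ - (1 - δ * f z / T)) * Z := by linarith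
    _ ≤ (1 + (d + 1) * δ - (1 - δ * f z / T)) * Z := by gcongr
    _ = δ / T * ((f z + (d + 1) * T) * Z) := by field_simp; ring

end AddHaar

/-- (Kalai–Vempala, Lemma 4.1, extended to convex functions.)
Let `K ⊂ ℝⁿ` be a compact convex set with nonempty interior, `f : K → ℝ` a continuous
convex function and `T > 0`.  If `X` has density proportional to `exp(−f(x)/T)` on `K`,
then `E[f(X)] − min_{x∈K} f(x) ≤ (n+1) T`. -/
theorem annealing_expectation_bound
    {n : ℕ} (K : Set (EuclideanSpace ℝ (Fin n)))
    (hKcomp : IsCompact K) (hKconv : Convex ℝ K) (hKint : (interior K).Nonempty)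
    (f : EuclideanSpace ℝ (Fin n) → ℝ)
    (hfcont : ContinuousOn f K) (hfconv : ConvexOn ℝ K f)
    (T : ℝ) (hT : 0 < T) :
    (∫ x, f x ∂((∫⁻ x in K, ENNReal.ofReal (Real.exp (-f x / T)))⁻¹ •
          ((volume.restrict K).withDensity fun x => ENNReal.ofReal (Real.exp (-f x / T)))))
        - sInf (f '' K)
      ≤ (n + 1) * T := by
  have hwI : IntegrableOn (fun x => exp (-f x / T)) K :=
    (continuous_exp.comp_continuousOn (hfcont.neg.div_const T)).integrableOn_compact hKcomp
  have : NeZero (volume.restrict K) := ⟨by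
    simpa [Measure.restrict_eq_zero] using (Measure.measure_pos_of_nonempty_interior _ hKint).ne'⟩
  have hZ : 0 < ∫ x in K, exp (-f x / T) := integral_exp_pos hwI
  rw [integral_inv_lintegral_smul_withDensity hwI
    (Filter.Eventually.of_forall fun _ => (exp_pos _).le), sub_le_comm]
  refine le_csInf ((hKint.mono interior_subset).image f) ?_
  rintro _ ⟨z, hz, rfl⟩
  rw [sub_le_iff_le_add, div_le_iff₀ hZ]
  have := setIntegral_exp_neg_div_mul_le volume hKcomp hKconv hfcont hfconv hz hT
  rw [finrank_euclideanSpace_fin] at this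
  linarith
end

section
/- Let K ⊂ ℝⁿ be a compact convex set with nonempty interior, let f : K → ℝ be a continuous convex function, let T > 0 and ρ ≥ 0, and let F : K → ℝ be a measurable function with sup_{x∈K} |F(x) − f(x)| ≤ ρ. If X is a random point in K with density proportional to exp(−F(x)/T), then E[f(X)] − min_{x∈K} f(x) ≤ (n+1) T · exp( 2ρ/T ). -/
open MeasureTheory


lemma aux_exp_ineq (T s u : ℝ) (hT : 0 < T) (hs : s < 1) (hu : 0 ≤ u) :
    u * Real.exp (-u / T) ≤ (T / (1 - s)) * (Real.exp (-(s * u) / T) - Real.exp (-u / T)) := by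
  have hs' : (0:ℝ) < 1 - s := by linarith
  have e1 : Real.exp (-(s * u) / T) = Real.exp (-u / T) * Real.exp ((1 - s) * u / T) := by
    rw [← Real.exp_add]; congr 1; field_simp; ring
  have h2 : (1 - s) * u / T ≤ Real.exp ((1 - s) * u / T) - 1 := by
    linarith [Real.add_one_le_exp ((1 - s) * u / T)]
  have hE : (0:ℝ) < Real.exp (-u / T) := Real.exp_pos _
  have := mul_le_mul_of_nonneg_left h2 hE.le
  calc u * Real.exp (-u / T)
      = (T / (1 - s)) * (Real.exp (-u / T) * ((1 - s) * u / T)) := by field_simp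
    _ ≤ (T / (1 - s)) * (Real.exp (-u / T) * (Real.exp ((1 - s) * u / T) - 1)) := by
        apply mul_le_mul_of_nonneg_left this (by positivity)
    _ = (T / (1 - s)) * (Real.exp (-(s * u) / T) - Real.exp (-u / T)) := by
        rw [e1]; ring

lemma aux_pow (n : ℕ) : ∃ s : ℝ, 0 < s ∧ s < 1 ∧ ((s⁻¹) ^ n - 1) ≤ ((n : ℝ) + 1) * (1 - s) := by
  set a : ℝ := (n : ℝ) with ha
  have ha0 : 0 ≤ a := Nat.cast_nonneg n
  set δ : ℝ := 1 / (2 * (a + 1) ^ 2) with hδ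
  have hδ0 : 0 < δ := by positivity
  have hδ2 : a * δ ≤ 1 / 2 := by
    rw [hδ, mul_one_div, div_le_div_iff₀ (by positivity) (by norm_num)]
    nlinarith [sq_nonneg (a + 1), sq_nonneg a]
  have hδ1 : δ ≤ 1 / 2 := by
    rw [hδ, div_le_div_iff₀ (by positivity) (by norm_num)]
    nlinarith [sq_nonneg (a + 1)]
  refine ⟨1 - δ, by linarith, by linarith, ?_⟩
  have hb : (1 : ℝ) - a * δ ≤ (1 - δ) ^ n := by
    have := one_add_mul_le_pow (a := -δ) (by linarith) n
    rw [← sub_eq_add_neg] at this; rw [ha]; linarith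
  have hb0 : (0:ℝ) < 1 - a * δ := by linarith
  have hs0 : (0:ℝ) < 1 - δ := by linarith
  have h3 : ((1 - δ)⁻¹) ^ n = ((1 - δ) ^ n)⁻¹ := inv_pow _ _
  have h4 : ((1 - δ) ^ n)⁻¹ ≤ (1 - a * δ)⁻¹ := by
    apply inv_anti₀ hb0 hb
  have h5 : (1 - a * δ)⁻¹ ≤ 1 + (a + 1) * δ := by
    rw [inv_le_iff_one_le_mul₀ hb0]
    have key : a * (a + 1) * δ ≤ 1 := by
      rw [hδ, mul_one_div, div_le_one (by positivity)]
      nlinarith [sq_nonneg (a + 1)]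
    nlinarith [hδ0.le, hδ2, key]
  have : (1 : ℝ) - (1 - δ) = δ := by ring
  rw [h3, this]
  nlinarith [h4, h5]


-- scaling/substitution lemma
lemma aux_subst {n : ℕ} (K : Set (EuclideanSpace ℝ (Fin n)))
    (hKcomp : IsCompact K) (hKconv : Convex ℝ K)
    (h : EuclideanSpace ℝ (Fin n) → ℝ) (hh : ContinuousOn h K) (hh0 : ∀ y, 0 ≤ h y)
    {x₀ : EuclideanSpace ℝ (Fin n)} (hx₀ : x₀ ∈ K)
    {s : ℝ} (hs0 : 0 < s) (hs1 : s < 1) :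
    ∫ x in K, h ((1 - s) • x₀ + s • x) ≤ (s⁻¹) ^ n * ∫ x in K, h x := by
  have hKmeas : MeasurableSet K := hKcomp.isClosed.measurableSet
  set φ : EuclideanSpace ℝ (Fin n) → EuclideanSpace ℝ (Fin n) :=
    fun x => (1 - s) • x₀ + s • x with hφ
  have hφcont : Continuous φ := by
    apply continuous_const.add (continuous_id.const_smul s)
  have hφinj : Function.Injective φ := by
    intro x y hxy
    have : s • x = s • y := by
      have := hxy
      simp only [hφ] at this
      exact add_left_cancel this
    exact smul_right_injective _ hs0.ne' this
  have hφK : φ '' K ⊆ K := by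
    rintro y ⟨x, hx, rfl⟩
    exact hKconv hx₀ hx (by linarith) hs0.le (by ring)
  have hφKmeas : MeasurableSet (φ '' K) := ((hKcomp.image hφcont).isClosed).measurableSet
  set G : EuclideanSpace ℝ (Fin n) → ℝ := (φ '' K).indicator h with hG
  have key : ∀ x, K.indicator (fun x => h (φ x)) x = G (φ x) := by
    intro x
    by_cases hx : x ∈ K
    · rw [Set.indicator_of_mem hx, hG, Set.indicator_of_mem (Set.mem_image_of_mem _ hx)]
    · rw [Set.indicator_of_notMem hx, hG, Set.indicator_of_notMem]
      rintro ⟨y, hy, hxy⟩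
      exact hx (hφinj hxy ▸ hy)
  have step1 : ∫ x in K, h (φ x) = ∫ x, G (φ x) := by
    rw [← integral_indicator hKmeas]
    exact integral_congr_ae (Filter.Eventually.of_forall key)
  have step2 : ∫ x, G (φ x) = (s ^ n)⁻¹ • ∫ x, G x := by
    have e1 : ∀ x, G (φ x) = (fun y => G ((1 - s) • x₀ + y)) (s • x) := fun x => rfl
    calc ∫ x, G (φ x) = ∫ x, (fun y => G ((1 - s) • x₀ + y)) (s • x) := rfl
      _ = (s ^ Module.finrank ℝ (EuclideanSpace ℝ (Fin n)))⁻¹ • ∫ y, G ((1 - s) • x₀ + y) :=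
          Measure.integral_comp_smul_of_nonneg volume (fun y => G ((1 - s) • x₀ + y)) s (hR := hs0.le)
      _ = (s ^ n)⁻¹ • ∫ x, G x := by
          rw [finrank_euclideanSpace_fin, integral_add_left_eq_self G ((1 - s) • x₀)]
  have step3 : ∫ x, G x ≤ ∫ x in K, h x := by
    rw [hG, integral_indicator hφKmeas]
    apply setIntegral_mono_set
    · exact hh.integrableOn_compact hKcomp
    · exact Filter.Eventually.of_forall fun x => hh0 x
    · exact Filter.Eventually.of_forall hφK
  calc ∫ x in K, h (φ x) = (s ^ n)⁻¹ • ∫ x, G x := by rw [step1, step2]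
    _ ≤ (s ^ n)⁻¹ • ∫ x in K, h x := by
        apply smul_le_smul_of_nonneg_left step3 (by positivity)
    _ = (s⁻¹) ^ n * ∫ x in K, h x := by rw [inv_pow]; rfl

/-- Let `K ⊂ ℝⁿ` be a compact convex set with nonempty interior,
`f : K → ℝ` a continuous convex function, `T > 0`, `ρ ≥ 0`, and `F : K → ℝ` a measurable
function with `sup_{x∈K} |F(x) − f(x)| ≤ ρ`.  If `X` has density proportional to
`exp(−F(x)/T)` on `K`, then `E[f(X)] − min_{x∈K} f(x) ≤ (n+1) T exp(2ρ/T)`. -/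
theorem annealing_expectation_bound_approx
    {n : ℕ} (K : Set (EuclideanSpace ℝ (Fin n)))
    (hKcomp : IsCompact K) (hKconv : Convex ℝ K) (hKint : (interior K).Nonempty)
    (f : EuclideanSpace ℝ (Fin n) → ℝ)
    (hfcont : ContinuousOn f K) (hfconv : ConvexOn ℝ K f)
    (T : ℝ) (hT : 0 < T) (ρ : ℝ) (hρ : 0 ≤ ρ)
    (F : EuclideanSpace ℝ (Fin n) → ℝ) (hFm : Measurable F)
    (hFf : ∀ x ∈ K, |F x - f x| ≤ ρ) :
    (∫ x, f x ∂((∫⁻ x in K, ENNReal.ofReal (Real.exp (-F x / T)))⁻¹ •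
          ((volume.restrict K).withDensity fun x => ENNReal.ofReal (Real.exp (-F x / T)))))
        - sInf (f '' K)
      ≤ (n + 1) * T * Real.exp (2 * ρ / T) := by
  classical
  have hKmeas : MeasurableSet K := hKcomp.isClosed.measurableSet
  have hKne : K.Nonempty := ⟨hKint.choose, interior_subset hKint.choose_spec⟩
  obtain ⟨x₀, hx₀K, hx₀min⟩ := hKcomp.exists_isMinOn hKne hfcont
  set m : ℝ := f x₀ with hm
  have hfm : ∀ x ∈ K, m ≤ f x := fun x hx => hx₀min hx
  have hleast : IsLeast (f '' K) m :=
    ⟨⟨x₀, hx₀K, rfl⟩, by rintro y ⟨z, hz, rfl⟩; exact hx₀min hz⟩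
  have hminf : sInf (f '' K) = m := hleast.csInf_eq
  haveI : IsFiniteMeasure (volume.restrict K) :=
    ⟨by rw [Measure.restrict_apply_univ]; exact hKcomp.measure_lt_top⟩
  have hwmeas : Measurable fun x => Real.exp (-F x / T) := (hFm.neg.div_const T).exp
  -- bounds for the density on K
  have hw_upper : ∀ x ∈ K, Real.exp (-F x / T) ≤
      Real.exp ((ρ - m) / T) * Real.exp (-(f x - m) / T) := by
    intro x hx
    rw [← Real.exp_add]
    apply Real.exp_le_exp.2
    have h1 : f x - ρ ≤ F x := by have := abs_le.1 (hFf x hx); linarith [this.1]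
    rw [← add_div, div_le_div_iff_of_pos_right hT]
    linarith
  have hw_lower : ∀ x ∈ K, Real.exp (-(f x - m) / T) ≤
      Real.exp ((m + ρ) / T) * Real.exp (-F x / T) := by
    intro x hx
    rw [← Real.exp_add]
    apply Real.exp_le_exp.2
    have h1 : F x ≤ f x + ρ := by have := abs_le.1 (hFf x hx); linarith [this.2]
    rw [← add_div, div_le_div_iff_of_pos_right hT]
    linarith
  have hexp1 : ∀ x ∈ K, Real.exp (-(f x - m) / T) ≤ 1 := by
    intro x hx
    apply Real.exp_le_one_iff.2
    have := hfm x hx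
    apply div_nonpos_of_nonpos_of_nonneg (by linarith) hT.le
  -- integrability
  have intf : IntegrableOn f K volume := hfcont.integrableOn_compact hKcomp
  have intw : IntegrableOn (fun x => Real.exp (-F x / T)) K volume := by
    apply Integrable.mono' (integrable_const (Real.exp ((ρ - m) / T)))
      hwmeas.aestronglyMeasurable
    refine (ae_restrict_iff' hKmeas).2 (ae_of_all _ fun x hx => ?_)
    rw [Real.norm_eq_abs, abs_of_nonneg (Real.exp_nonneg _)]
    calc Real.exp (-F x / T) ≤ Real.exp ((ρ - m) / T) * Real.exp (-(f x - m) / T) :=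
          hw_upper x hx
      _ ≤ Real.exp ((ρ - m) / T) * 1 := by
          apply mul_le_mul_of_nonneg_left (hexp1 x hx) (Real.exp_nonneg _)
      _ = Real.exp ((ρ - m) / T) := mul_one _
  have intwf : IntegrableOn (fun x => Real.exp (-F x / T) * f x) K volume := by
    have hms : AEStronglyMeasurable (fun x => Real.exp (-F x / T) * f x)
        (volume.restrict K) :=
      hwmeas.aestronglyMeasurable.mul intf.aestronglyMeasurable
    apply Integrable.mono' (intf.norm.const_mul (Real.exp ((ρ - m) / T))) hms
    refine (ae_restrict_iff' hKmeas).2 (ae_of_all _ fun x hx => ?_)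
    rw [norm_mul, Real.norm_eq_abs (Real.exp _), abs_of_nonneg (Real.exp_nonneg _)]
    apply mul_le_mul_of_nonneg_right _ (norm_nonneg _)
    calc Real.exp (-F x / T) ≤ Real.exp ((ρ - m) / T) * Real.exp (-(f x - m) / T) :=
          hw_upper x hx
      _ ≤ Real.exp ((ρ - m) / T) * 1 := by
          apply mul_le_mul_of_nonneg_left (hexp1 x hx) (Real.exp_nonneg _)
      _ = Real.exp ((ρ - m) / T) := mul_one _
  set D : ℝ := ∫ x in K, Real.exp (-F x / T) with hD
  set I : ℝ := ∫ x in K, Real.exp (-F x / T) * f x with hI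
  -- positivity of D
  obtain ⟨xM, hxMK, hxMmax⟩ := hKcomp.exists_isMaxOn hKne hfcont
  have hD_pos : 0 < D := by
    have hεw : ∀ x ∈ K, Real.exp (-(f xM + ρ) / T) ≤ Real.exp (-F x / T) := by
      intro x hx
      apply Real.exp_le_exp.2
      have h1 : F x ≤ f x + ρ := by have := abs_le.1 (hFf x hx); linarith [this.2]
      have h2 : f x ≤ f xM := hxMmax hx
      rw [div_le_div_iff_of_pos_right hT]
      linarith
    have hKvol : 0 < volume K := Measure.measure_pos_of_nonempty_interior _ hKint
    have h := setIntegral_ge_of_const_le hKmeas hKcomp.measure_lt_top.ne hεw intw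
    have hvtr : 0 < (volume K).toReal :=
      ENNReal.toReal_pos hKvol.ne' hKcomp.measure_lt_top.ne
    calc (0:ℝ) < Real.exp (-(f xM + ρ) / T) * (volume K).toReal := by positivity
      _ ≤ D := by rw [mul_comm]; exact h
  -- rewrite the expectation
  have hc : (∫⁻ x in K, ENNReal.ofReal (Real.exp (-F x / T))) = ENNReal.ofReal D :=
    (ofReal_integral_eq_lintegral_ofReal intw
      (ae_of_all _ fun x => Real.exp_nonneg _)).symm
  have hgoal : (∫ x, f x ∂((∫⁻ x in K, ENNReal.ofReal (Real.exp (-F x / T)))⁻¹ •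
          ((volume.restrict K).withDensity fun x => ENNReal.ofReal (Real.exp (-F x / T)))))
      = D⁻¹ * I := by
    rw [hc, integral_smul_measure]
    have h1 : (fun x => ENNReal.ofReal (Real.exp (-F x / T)))
        = (fun x => ((Real.exp (-F x / T)).toNNReal : ENNReal)) := rfl
    have hmw : Measurable (fun x => (Real.exp (-F x / T)).toNNReal) :=
      measurable_real_toNNReal.comp hwmeas
    rw [h1, integral_withDensity_eq_integral_smul hmw f]
    have h2 : ∀ x, (Real.exp (-F x / T)).toNNReal • f x = Real.exp (-F x / T) * f x := by
      intro x
      rw [NNReal.smul_def, smul_eq_mul, Real.coe_toNNReal _ (Real.exp_nonneg _)]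
    rw [integral_congr_ae (ae_of_all _ h2)]
    rw [← ENNReal.ofReal_inv_of_pos hD_pos, ENNReal.toReal_ofReal (by positivity)]
    rfl
  rw [hgoal, hminf]
  obtain ⟨s, hs0, hs1, hsle⟩ := aux_pow n
  have hgc : ContinuousOn (fun x => f x - m) K := hfcont.sub continuousOn_const
  have hBcont : ContinuousOn (fun x => Real.exp (-(f x - m) / T)) K :=
    Real.continuous_exp.comp_continuousOn (hgc.neg.div_const T)
  have hAcont : ContinuousOn (fun x => (f x - m) * Real.exp (-(f x - m) / T)) K :=
    hgc.mul hBcont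
  have hBscont : ContinuousOn (fun x => Real.exp (-(s * (f x - m)) / T)) K :=
    Real.continuous_exp.comp_continuousOn (((continuousOn_const.mul hgc).neg).div_const T)
  have intB : IntegrableOn (fun x => Real.exp (-(f x - m) / T)) K volume :=
    hBcont.integrableOn_compact hKcomp
  have intA : IntegrableOn (fun x => (f x - m) * Real.exp (-(f x - m) / T)) K volume :=
    hAcont.integrableOn_compact hKcomp
  have intBs : IntegrableOn (fun x => Real.exp (-(s * (f x - m)) / T)) K volume :=
    hBscont.integrableOn_compact hKcomp
  set A : ℝ := ∫ x in K, (f x - m) * Real.exp (-(f x - m) / T) with hA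
  set B : ℝ := ∫ x in K, Real.exp (-(f x - m) / T) with hB
  set Bs : ℝ := ∫ x in K, Real.exp (-(s * (f x - m)) / T) with hBs
  have hB0 : 0 ≤ B := setIntegral_nonneg hKmeas fun x _ => Real.exp_nonneg _
  have intwg : IntegrableOn (fun x => Real.exp (-F x / T) * (f x - m)) K volume := by
    have heq : (fun x => Real.exp (-F x / T) * (f x - m))
        = fun x => Real.exp (-F x / T) * f x - Real.exp (-F x / T) * m := by
      funext x; ring
    rw [heq]; exact intwf.sub (intw.mul_const m)
  set N : ℝ := ∫ x in K, Real.exp (-F x / T) * (f x - m) with hN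
  have hNval : N = I - D * m := by
    calc N = ∫ x in K, (Real.exp (-F x / T) * f x - Real.exp (-F x / T) * m) :=
          integral_congr_ae (ae_of_all _ fun x => by ring)
      _ = I - ∫ x in K, Real.exp (-F x / T) * m := by
          rw [integral_sub intwf (intw.mul_const m)]
      _ = I - D * m := by rw [integral_mul_const]
  have step1 : N ≤ Real.exp ((ρ - m) / T) * A := by
    calc N ≤ ∫ x in K, Real.exp ((ρ - m) / T) *
          ((f x - m) * Real.exp (-(f x - m) / T)) := by
          apply setIntegral_mono_on intwg (intA.const_mul _) hKmeas
          intro x hx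
          have h1 := hw_upper x hx
          have h2 : 0 ≤ f x - m := by linarith [hfm x hx]
          calc Real.exp (-F x / T) * (f x - m)
              ≤ (Real.exp ((ρ - m) / T) * Real.exp (-(f x - m) / T)) * (f x - m) :=
                mul_le_mul_of_nonneg_right h1 h2
            _ = Real.exp ((ρ - m) / T) * ((f x - m) * Real.exp (-(f x - m) / T)) := by
                ring
      _ = Real.exp ((ρ - m) / T) * A := by rw [integral_const_mul]
  have step2a : A ≤ (T / (1 - s)) * (Bs - B) := by
    calc A ≤ ∫ x in K, (T / (1 - s)) *
          (Real.exp (-(s * (f x - m)) / T) - Real.exp (-(f x - m) / T)) := by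
          apply setIntegral_mono_on intA ((intBs.sub intB).const_mul _) hKmeas
          intro x hx
          exact aux_exp_ineq T s (f x - m) hT hs1 (by linarith [hfm x hx])
      _ = (T / (1 - s)) * (Bs - B) := by
          rw [integral_const_mul, integral_sub intBs intB]
  have step2b : Bs ≤ (s⁻¹) ^ n * B := by
    have hmaps : ∀ x ∈ K, (1 - s) • x₀ + s • x ∈ K := fun x hx =>
      hKconv hx₀K hx (by linarith) hs0.le (by ring)
    have hcomp : ContinuousOn
        (fun x => Real.exp (-(f ((1 - s) • x₀ + s • x) - m) / T)) K := by
      apply Real.continuous_exp.comp_continuousOn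
      apply ContinuousOn.div_const
      apply ContinuousOn.neg
      apply ContinuousOn.sub _ continuousOn_const
      exact hfcont.comp
        (Continuous.continuousOn (continuous_const.add (continuous_id.const_smul s)))
        hmaps
    calc Bs ≤ ∫ x in K, Real.exp (-(f ((1 - s) • x₀ + s • x) - m) / T) := by
          apply setIntegral_mono_on intBs (hcomp.integrableOn_compact hKcomp) hKmeas
          intro x hx
          apply Real.exp_le_exp.2
          have hconv := hfconv.2 hx₀K hx (by linarith : (0:ℝ) ≤ 1 - s) hs0.le (by ring)
          simp only [smul_eq_mul] at hconv
          have hkey : f ((1 - s) • x₀ + s • x) - m ≤ s * (f x - m) := by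
            have hb : (1 - s) * f x₀ + s * f x - m = s * (f x - m) := by
              rw [hm]; ring
            linarith [hconv]
          rw [div_le_div_iff_of_pos_right hT]
          linarith
      _ ≤ (s⁻¹) ^ n * B :=
          aux_subst K hKcomp hKconv _ hBcont (fun y => Real.exp_nonneg _) hx₀K hs0 hs1
  have step2 : A ≤ ((n : ℝ) + 1) * T * B := by
    have h1 : Bs - B ≤ ((s⁻¹) ^ n - 1) * B := by nlinarith [step2b]
    have hs2 : (0:ℝ) < 1 - s := by linarith
    have h2 : (T / (1 - s)) * (Bs - B) ≤ (T / (1 - s)) * (((s⁻¹) ^ n - 1) * B) :=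
      mul_le_mul_of_nonneg_left h1 (by positivity)
    have h3 : (T / (1 - s)) * (((s⁻¹) ^ n - 1) * B)
        ≤ (T / (1 - s)) * ((((n : ℝ) + 1) * (1 - s)) * B) := by
      apply mul_le_mul_of_nonneg_left _ (by positivity)
      exact mul_le_mul_of_nonneg_right hsle hB0
    have h4 : (T / (1 - s)) * ((((n : ℝ) + 1) * (1 - s)) * B) = ((n : ℝ) + 1) * T * B := by
      field_simp
    linarith [step2a]
  have step3 : B ≤ Real.exp ((m + ρ) / T) * D := by
    calc B ≤ ∫ x in K, Real.exp ((m + ρ) / T) * Real.exp (-F x / T) := by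
          apply setIntegral_mono_on intB (intw.const_mul _) hKmeas
          intro x hx; exact hw_lower x hx
      _ = Real.exp ((m + ρ) / T) * D := by rw [integral_const_mul]
  have hC1 : (0:ℝ) ≤ Real.exp ((ρ - m) / T) := Real.exp_nonneg _
  have hNfinal : N ≤ ((n : ℝ) + 1) * T * Real.exp (2 * ρ / T) * D := by
    calc N ≤ Real.exp ((ρ - m) / T) * A := step1
      _ ≤ Real.exp ((ρ - m) / T) * (((n : ℝ) + 1) * T * B) :=
          mul_le_mul_of_nonneg_left step2 hC1
      _ ≤ Real.exp ((ρ - m) / T) * (((n : ℝ) + 1) * T * (Real.exp ((m + ρ) / T) * D)) := by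
          apply mul_le_mul_of_nonneg_left _ hC1
          apply mul_le_mul_of_nonneg_left step3 (by positivity)
      _ = ((n : ℝ) + 1) * T * (Real.exp ((ρ - m) / T) * Real.exp ((m + ρ) / T)) * D := by
          ring
      _ = ((n : ℝ) + 1) * T * Real.exp (2 * ρ / T) * D := by
          rw [← Real.exp_add, show (ρ - m) / T + (m + ρ) / T = 2 * ρ / T by
            field_simp; ring]
  have hDne : D ≠ 0 := hD_pos.ne'
  have hfin : D⁻¹ * I - m = D⁻¹ * N := by
    rw [hNval]
    field_simp
  rw [hfin]
  calc D⁻¹ * N ≤ D⁻¹ * (((n : ℝ) + 1) * T * Real.exp (2 * ρ / T) * D) :=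
      mul_le_mul_of_nonneg_left hNfinal (by positivity)
    _ = ((n : ℝ) + 1) * T * Real.exp (2 * ρ / T) := by field_simp
end
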